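/- arXiv:2411.03778 — 3 statements merged into one kernel-verified Lean document; each statement's English description precedes it below -/
import Mathlib

section
/- If K is a global non-saddle set for a flow on a closed connected manifold M and S is a global section of the (parallelizable) restricted flow on M \ K, then the quotient space M/K is homotopy equivalent to the wedge sum ΣS ∨ S¹, where ΣS denotes the (unreduced) suspension of S. -/
open Set Filter Topology CategoryTheory Metric

noncomputable section

namespace Paper

/-! ### Dynamics: flows, limit sets, non-saddle sets, attractors, W-sets -/

variable {M : Type} [TopologicalSpace M]

/-- The ω-limit set of a point under a flow. -/
def omegaLim (φ : Flow ℝ M) (x : M) : Set M := omegaLimit Filter.atTop φ.toFun {x}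

/-- The ω*-limit (backward limit) set of a point under a flow. -/
def alphaLim (φ : Flow ℝ M) (x : M) : Set M := omegaLimit Filter.atBot φ.toFun {x}

/-- The positive semiorbit of `x` is contained in `U`. -/
def PosOrbitIn (φ : Flow ℝ M) (U : Set M) (x : M) : Prop := ∀ t : ℝ, 0 ≤ t → φ t x ∈ U

/-- The negative semiorbit of `x` is contained in `U`. -/
def NegOrbitIn (φ : Flow ℝ M) (U : Set M) (x : M) : Prop := ∀ t : ℝ, t ≤ 0 → φ t x ∈ U

/-- A non-saddle set (Bhatia): a compact invariant set such that every neighbourhood `U`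
contains a neighbourhood `V` all of whose points have their positive or negative semiorbit
contained in `U`. -/
def IsNonSaddle (φ : Flow ℝ M) (K : Set M) : Prop :=
  IsCompact K ∧ IsInvariant φ.toFun K ∧
    ∀ U ∈ 𝓝ˢ K, ∃ V ∈ 𝓝ˢ K, V ⊆ U ∧ ∀ x ∈ V, PosOrbitIn φ U x ∨ NegOrbitIn φ U x

/-- The maximal invariant subset of `N`. -/
def maxInvariant (φ : Flow ℝ M) (N : Set M) : Set M := {x | ∀ t : ℝ, φ t x ∈ N}

/-- `N` is an isolating neighbourhood for `K`. -/
def IsIsolatingNbhd (φ : Flow ℝ M) (N K : Set M) : Prop :=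
  IsCompact N ∧ K ⊆ interior N ∧ maxInvariant φ N = K

/-- `K` is an isolated invariant set in the sense of Conley. -/
def IsIsolatedInvariant (φ : Flow ℝ M) (K : Set M) : Prop :=
  IsCompact K ∧ IsInvariant φ.toFun K ∧ ∃ N, IsIsolatingNbhd φ N K

/-- The region of influence of `K`: points whose ω- or ω*-limit is nonempty and contained
in `K`. -/
def InfluenceRegion (φ : Flow ℝ M) (K : Set M) : Set M :=
  {x | ((omegaLim φ x).Nonempty ∧ omegaLim φ x ⊆ K) ∨
       ((alphaLim φ x).Nonempty ∧ alphaLim φ x ⊆ K)}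

/-- A global non-saddle set: a proper, nonempty, isolated non-saddle set whose region of
influence is the whole phase space. -/
def IsGlobalNonSaddle (φ : Flow ℝ M) (K : Set M) : Prop :=
  IsNonSaddle φ K ∧ IsIsolatedInvariant φ K ∧ K.Nonempty ∧ K ≠ univ ∧
    InfluenceRegion φ K = univ

/-- The basin of attraction of `K`. -/
def Basin (φ : Flow ℝ M) (K : Set M) : Set M :=
  {x | (omegaLim φ x).Nonempty ∧ omegaLim φ x ⊆ K}

/-- The basin of repulsion of `K`. -/
def RepBasin (φ : Flow ℝ M) (K : Set M) : Set M :=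
  {x | (alphaLim φ x).Nonempty ∧ alphaLim φ x ⊆ K}

/-- A (stable) attractor: compact invariant, attracting a neighbourhood, Lyapunov stable. -/
def IsAttractor (φ : Flow ℝ M) (K : Set M) : Prop :=
  IsCompact K ∧ IsInvariant φ.toFun K ∧ Basin φ K ∈ 𝓝ˢ K ∧
    ∀ U ∈ 𝓝ˢ K, ∃ V ∈ 𝓝ˢ K, ∀ x ∈ V, PosOrbitIn φ U x

/-- A repeller: an attractor for the time-reversed flow. -/
def IsRepeller (φ : Flow ℝ M) (K : Set M) : Prop :=
  IsCompact K ∧ IsInvariant φ.toFun K ∧ RepBasin φ K ∈ 𝓝ˢ K ∧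
    ∀ U ∈ 𝓝ˢ K, ∃ V ∈ 𝓝ˢ K, ∀ x ∈ V, NegOrbitIn φ U x

/-- An unstable attractor: attracts a neighbourhood, but possibly not stable. -/
def IsUnstableAttractor (φ : Flow ℝ M) (K : Set M) : Prop :=
  IsCompact K ∧ IsInvariant φ.toFun K ∧ Basin φ K ∈ 𝓝ˢ K

/-- An attractor-repeller decomposition `(A, R)` of the phase space:
`R` is the complement of the basin of attraction of the attractor `A`. -/
def IsAttractorRepellerPair (φ : Flow ℝ M) (A R : Set M) : Prop :=
  IsAttractor φ A ∧ IsRepeller φ R ∧ R = (Basin φ A)ᶜ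

/-- `x` is witnessed by `K`: its ω- or ω*-limit set meets `K`. -/
def Witnessed (φ : Flow ℝ M) (K : Set M) (x : M) : Prop :=
  ((omegaLim φ x ∪ alphaLim φ x) ∩ K).Nonempty

/-- The witness region of `K`: all points witnessed by `K`. -/
def WitnessRegion (φ : Flow ℝ M) (K : Set M) : Set M := {x | Witnessed φ K x}

/-- A `W`-set: a compact invariant set which witnesses a whole neighbourhood of itself. -/
def IsWSet (φ : Flow ℝ M) (K : Set M) : Prop :=
  IsCompact K ∧ IsInvariant φ.toFun K ∧ WitnessRegion φ K ∈ 𝓝ˢ K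

/-- A global `W`-set: its witness region is the whole phase space. -/
def IsGlobalWSet (φ : Flow ℝ M) (K : Set M) : Prop :=
  IsWSet φ K ∧ WitnessRegion φ K = univ

/-- The weak basin of attraction: points whose ω-limit meets `K`. -/
def WeakBasin (φ : Flow ℝ M) (K : Set M) : Set M := {x | (omegaLim φ x ∩ K).Nonempty}

/-- A weak attractor: the weak basin is a neighbourhood of `K`. -/
def IsWeakAttractor (φ : Flow ℝ M) (K : Set M) : Prop :=
  IsCompact K ∧ IsInvariant φ.toFun K ∧ WeakBasin φ K ∈ 𝓝ˢ K

/-- `x` is homoclinic to `K`: both its limit sets are nonempty and contained in `K`. -/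
def Homoclinic (φ : Flow ℝ M) (K : Set M) (x : M) : Prop :=
  (omegaLim φ x).Nonempty ∧ omegaLim φ x ⊆ K ∧
  (alphaLim φ x).Nonempty ∧ alphaLim φ x ⊆ K

/-- The orbit of `x` is a connecting orbit between `A` and `B` (in either direction). -/
def IsConnectingOrbit (φ : Flow ℝ M) (A B : Set M) (x : M) : Prop :=
  ((omegaLim φ x).Nonempty ∧ omegaLim φ x ⊆ A ∧
    (alphaLim φ x).Nonempty ∧ alphaLim φ x ⊆ B) ∨
  ((omegaLim φ x).Nonempty ∧ omegaLim φ x ⊆ B ∧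
    (alphaLim φ x).Nonempty ∧ alphaLim φ x ⊆ A)

/-- A non-saddle decomposition `(K, L)`: disjoint isolated non-saddle sets such that
every orbit outside `K ∪ L` is a connecting orbit between them. -/
def IsNonSaddleDecomposition (φ : Flow ℝ M) (K L : Set M) : Prop :=
  Disjoint K L ∧ K.Nonempty ∧ L.Nonempty ∧
  IsNonSaddle φ K ∧ IsIsolatedInvariant φ K ∧
  IsNonSaddle φ L ∧ IsIsolatedInvariant φ L ∧
  ∀ x, x ∉ K ∪ L → IsConnectingOrbit φ K L x

/-- `S` is a global section of the restricted flow on `M \ K`: a closed subset of `M \ K`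
such that `(x, t) ↦ φ t x` is a homeomorphism `S × ℝ ≃ M \ K`. -/
def IsGlobalSection (φ : Flow ℝ M) (K S : Set M) : Prop :=
  S ⊆ Kᶜ ∧ IsClosed {y : ↥(Kᶜ) | (y : M) ∈ S} ∧
  ∃ h : ↥S × ℝ ≃ₜ ↥(Kᶜ), ∀ p : ↥S × ℝ, (h p : M) = φ p.2 (p.1 : M)

/-! #### Isolating blocks -/

/-- Immediate exit point of `N`. -/
def IsImmediateExit (φ : Flow ℝ M) (N : Set M) (x : M) : Prop :=
  ∀ ε > (0:ℝ), ∃ t : ℝ, 0 < t ∧ t < ε ∧ φ t x ∉ N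

/-- Immediate entry point of `N`. -/
def IsImmediateEntry (φ : Flow ℝ M) (N : Set M) (x : M) : Prop :=
  ∀ ε > (0:ℝ), ∃ t : ℝ, -ε < t ∧ t < 0 ∧ φ t x ∉ N

/-- The exit set `Nᵒ` of `N`. -/
def ExitSet (φ : Flow ℝ M) (N : Set M) : Set M :=
  {x | x ∈ frontier N ∧ IsImmediateExit φ N x}

/-- The entry set `Nⁱ` of `N`. -/
def EntrySet (φ : Flow ℝ M) (N : Set M) : Set M :=
  {x | x ∈ frontier N ∧ IsImmediateEntry φ N x}

/-- Transverse entry point into `N`. -/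
def IsTransverseEntry (φ : Flow ℝ M) (N : Set M) (x : M) : Prop :=
  ∃ ε > (0:ℝ), (∀ t : ℝ, -ε < t → t < 0 → φ t x ∉ N) ∧
    (∀ t : ℝ, 0 < t → t < ε → φ t x ∈ interior N)

/-- Transverse exit point of `N`. -/
def IsTransverseExit (φ : Flow ℝ M) (N : Set M) (x : M) : Prop :=
  ∃ ε > (0:ℝ), (∀ t : ℝ, -ε < t → t < 0 → φ t x ∈ interior N) ∧
    (∀ t : ℝ, 0 < t → t < ε → φ t x ∉ N)

/-- Exterior tangency point of `N`. -/
def IsExteriorTangency (φ : Flow ℝ M) (N : Set M) (x : M) : Prop :=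
  ∃ ε > (0:ℝ), ∀ t : ℝ, t ≠ 0 → -ε < t → t < ε → φ t x ∉ N

/-- An isolating block: a compact neighbourhood whose boundary consists of transverse
entry, transverse exit and exterior tangency points, with closed entry and exit sets. -/
def IsIsolatingBlock (φ : Flow ℝ M) (N : Set M) : Prop :=
  IsCompact N ∧
  (∀ x ∈ frontier N,
      IsTransverseEntry φ N x ∨ IsTransverseExit φ N x ∨ IsExteriorTangency φ N x) ∧
  IsClosed (ExitSet φ N) ∧ IsClosed (EntrySet φ N)

/-! ### Topological constructions -/

/-- The unreduced suspension of a space. -/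
def Susp (X : Type) [TopologicalSpace X] : Type :=
  Quot fun p q : X × unitInterval => p.2 = q.2 ∧ (p.2 = 0 ∨ p.2 = 1 ∨ p.1 = q.1)

instance (X : Type) [TopologicalSpace X] : TopologicalSpace (Susp X) :=
  inferInstanceAs (TopologicalSpace (Quot _))

/-- The south cone point of the suspension (image of `(x, 0)`). -/
def suspSouth (X : Type) [TopologicalSpace X] (x : X) : Susp X :=
  Quot.mk _ (x, (0 : unitInterval))

/-- The wedge sum of two pointed spaces. -/
def Wedge (X Y : Type) [TopologicalSpace X] [TopologicalSpace Y] (x₀ : X) (y₀ : Y) : Type :=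
  Quot fun a b : X ⊕ Y => a = Sum.inl x₀ ∧ b = Sum.inr y₀

instance (X Y : Type) [TopologicalSpace X] [TopologicalSpace Y] (x₀ : X) (y₀ : Y) :
    TopologicalSpace (Wedge X Y x₀ y₀) := inferInstanceAs (TopologicalSpace (Quot _))

/-- The quotient space `M/K` obtained by collapsing `K ⊆ M` to a point. -/
def QuotBySet (M : Type) [TopologicalSpace M] (K : Set M) : Type :=
  Quot fun a b : M => a ∈ K ∧ b ∈ K

instance (M : Type) [TopologicalSpace M] (K : Set M) : TopologicalSpace (QuotBySet M K) :=
  inferInstanceAs (TopologicalSpace (Quot _))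

/-- Real projective `n`-space, as the quotient of `ℝ^{n+1} \ {0}` by scaling. -/
def RealProjSpace (n : ℕ) : Type :=
  Quot fun x y : {v : EuclideanSpace ℝ (Fin (n+1)) // v ≠ 0} =>
    ∃ c : ℝ, c ≠ 0 ∧ (y : EuclideanSpace ℝ (Fin (n+1))) = c • (x : EuclideanSpace ℝ (Fin (n+1)))

instance (n : ℕ) : TopologicalSpace (RealProjSpace n) :=
  inferInstanceAs (TopologicalSpace (Quot _))

/-- The 2-torus. -/
def Torus : Type := Circle × Circle

instance : TopologicalSpace Torus := inferInstanceAs (TopologicalSpace (Circle × Circle))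

/-- `M` is a connected sum of `X` and `Y`: `M` decomposes into closed pieces `A`, `B`
homeomorphic respectively to `X` and `Y` with an open disk removed, glued along the
boundary circle. -/
def IsConnectedSum (M : Type) [TopologicalSpace M] (X : Type) [TopologicalSpace X]
    (Y : Type) [TopologicalSpace Y] : Prop :=
  ∃ (eX : EuclideanSpace ℝ (Fin 2) → X) (eY : EuclideanSpace ℝ (Fin 2) → Y)
    (A B : Set M)
    (hA : ↥A ≃ₜ ↥((eX '' Metric.ball 0 1)ᶜ)) (hB : ↥B ≃ₜ ↥((eY '' Metric.ball 0 1)ᶜ)),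
    IsOpenEmbedding eX ∧ IsOpenEmbedding eY ∧
    IsClosed A ∧ IsClosed B ∧ A ∪ B = univ ∧
    (∀ a : ↥A, (a : M) ∈ B ↔
      ∃ v ∈ Metric.sphere (0 : EuclideanSpace ℝ (Fin 2)) 1, ((hA a : ↥((eX '' Metric.ball 0 1)ᶜ)) : X) = eX v) ∧
    (∀ b : ↥B, (b : M) ∈ A ↔
      ∃ v ∈ Metric.sphere (0 : EuclideanSpace ℝ (Fin 2)) 1, ((hB b : ↥((eY '' Metric.ball 0 1)ᶜ)) : Y) = eY v)

/-- `M` is a connected sum of `g` copies of `X` (`g ≥ 1`). -/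
def IsConnSumOfCopies (X : Type) [TopologicalSpace X] :
    ℕ → ∀ (M : Type), TopologicalSpace M → Prop
  | 0, _, _ => False
  | 1, M, tM => letI := tM; Nonempty (M ≃ₜ X)
  | (n+2), M, tM => ∃ (Y : Type) (tY : TopologicalSpace Y),
      IsConnSumOfCopies X (n+1) Y tY ∧ (letI := tM; letI := tY; IsConnectedSum M Y X)

/-! ### An abstract Čech cohomology theory -/

/-- The inclusion of a subspace, as a morphism in `TopCat`. -/
def inclHom (X : TopCat.{0}) (A : Set X) : TopCat.of A ⟶ X :=
  TopCat.ofHom ⟨Subtype.val, continuous_subtype_val⟩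

/-- The inclusion between subspaces, as a morphism in `TopCat`. -/
def setIncHom {X : TopCat.{0}} {A B : Set X} (h : A ⊆ B) : TopCat.of A ⟶ TopCat.of B :=
  TopCat.ofHom ⟨Set.inclusion h, continuous_inclusion h⟩

/-- The quotient map `X → X/A`, as a morphism in `TopCat`. -/
def quotHom (X : TopCat.{0}) (A : Set X) :
    X ⟶ TopCat.of (Quot fun a b : X => a ∈ A ∧ b ∈ A) :=
  TopCat.ofHom ⟨Quot.mk _, continuous_quot_mk⟩

/-- An abstract Čech-type cohomology theory with coefficients in `R` on pairs `(X, A)`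
of a topological space and a subset, graded by `ℤ`: a contravariant, homotopy-invariant
functor with exact sequences of pairs, the dimension axiom, strong excision for compact
pairs and continuity with respect to decreasing sequences of compacta. -/
structure CechTheory (R : Type) [CommRing R] : Type 1 where
  coh : ℤ → (X : TopCat.{0}) → Set X → ModuleCat.{0} R
  map : ∀ (n : ℤ) {X Y : TopCat.{0}} {A : Set X} {B : Set Y} (f : X ⟶ Y),
      A ⊆ f ⁻¹' B → (coh n Y B ⟶ coh n X A)
  map_id : ∀ (n : ℤ) (X : TopCat.{0}) (A : Set X) (h : A ⊆ (𝟙 X : X ⟶ X) ⁻¹' A),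
      map n (𝟙 X) h = 𝟙 (coh n X A)
  map_comp : ∀ (n : ℤ) {X Y Z : TopCat.{0}} {A : Set X} {B : Set Y} {C : Set Z}
      (f : X ⟶ Y) (g : Y ⟶ Z) (hf : A ⊆ f ⁻¹' B) (hg : B ⊆ g ⁻¹' C)
      (hfg : A ⊆ (f ≫ g) ⁻¹' C),
      map n (f ≫ g) hfg = map n g hg ≫ map n f hf
  homotopy_invariance : ∀ (n : ℤ) {X Y : TopCat.{0}} {A : Set X} {B : Set Y}
      (f g : X ⟶ Y) (hf : A ⊆ f ⁻¹' B) (hg : A ⊆ g ⁻¹' B)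
      (F : ContinuousMap.Homotopy f.hom g.hom),
      (∀ (t : unitInterval) (a : X), a ∈ A → F (t, a) ∈ B) →
      map n f hf = map n g hg
  δ : ∀ (n : ℤ) (X : TopCat.{0}) (A : Set X),
      (coh n (TopCat.of A) ∅ ⟶ coh (n + 1) X A)
  pair_exact₁ : ∀ (n : ℤ) (X : TopCat.{0}) (A : Set X)
      (h₁ : (∅ : Set X) ⊆ (𝟙 X : X ⟶ X) ⁻¹' A)
      (h₂ : (∅ : Set ↥A) ⊆ (inclHom X A) ⁻¹' (∅ : Set X)),
      Function.Exact ⇑(map n (𝟙 X) h₁) ⇑(map n (inclHom X A) h₂)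
  pair_exact₂ : ∀ (n : ℤ) (X : TopCat.{0}) (A : Set X)
      (h₂ : (∅ : Set ↥A) ⊆ (inclHom X A) ⁻¹' (∅ : Set X)),
      Function.Exact ⇑(map n (inclHom X A) h₂) ⇑(δ n X A)
  pair_exact₃ : ∀ (n : ℤ) (X : TopCat.{0}) (A : Set X)
      (h₁ : (∅ : Set X) ⊆ (𝟙 X : X ⟶ X) ⁻¹' A),
      Function.Exact ⇑(δ n X A) ⇑(map (n + 1) (𝟙 X) h₁)
  dim_iso : Nonempty ((coh 0 (TopCat.of PUnit) ∅ : Type) ≃ₗ[R] R)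
  dim_vanish : ∀ n : ℤ, n ≠ 0 → Subsingleton (coh n (TopCat.of PUnit) ∅)
  strong_excision : ∀ (n : ℤ) (X : TopCat.{0}) (A : Set X), CompactSpace X → T2Space X →
      IsClosed A → ∀ (h : A ⊆ (quotHom X A) ⁻¹' ((quotHom X A) '' A)),
      Function.Bijective ⇑(map n (quotHom X A) h)
  continuity_surj : ∀ (n : ℤ) (X : TopCat.{0}) (A : ℕ → Set X), (∀ i, IsCompact (A i)) →
      (∀ i, A (i + 1) ⊆ A i) →
      ∀ x : coh n (TopCat.of (⋂ i, A i)) ∅, ∃ (i : ℕ) (y : coh n (TopCat.of (A i)) ∅)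
        (h : (∅ : Set ↥(⋂ i, A i)) ⊆ (setIncHom (iInter_subset A i)) ⁻¹' (∅ : Set ↥(A i))),
        map n (setIncHom (iInter_subset A i)) h y = x
  continuity_inj : ∀ (n : ℤ) (X : TopCat.{0}) (A : ℕ → Set X), (∀ i, IsCompact (A i)) →
      (∀ i, A (i + 1) ⊆ A i) →
      ∀ (i : ℕ) (y : coh n (TopCat.of (A i)) ∅)
        (h : (∅ : Set ↥(⋂ i, A i)) ⊆ (setIncHom (iInter_subset A i)) ⁻¹' (∅ : Set ↥(A i))),
        map n (setIncHom (iInter_subset A i)) h y = 0 →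
        ∃ (j : ℕ) (hj : A j ⊆ A i)
          (h' : (∅ : Set ↥(A j)) ⊆ (setIncHom hj) ⁻¹' (∅ : Set ↥(A i))),
          map n (setIncHom hj) h' y = 0

namespace CechTheory

variable {R : Type} [CommRing R] (T : CechTheory R)

/-- Absolute Čech cohomology of a space. -/
def cohOf (n : ℤ) (X : Type) [TopologicalSpace X] : ModuleCat.{0} R :=
  T.coh n (TopCat.of X) ∅

/-- The Euler characteristic of a pair, as an alternating sum of ranks
(meaningful for pairs of finite type). -/
noncomputable def eulerPair (X : Type) [TopologicalSpace X] (A : Set X) : ℤ :=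
  ∑ᶠ k : ℕ, (-1 : ℤ) ^ k * Module.finrank R (T.coh (k : ℤ) (TopCat.of X) A)

/-- The Euler characteristic of a space. -/
noncomputable def euler (X : Type) [TopologicalSpace X] : ℤ := T.eulerPair X ∅

/-- Total even Betti number, with value in `ℕ∞`. -/
noncomputable def evenB (X : Type) [TopologicalSpace X] : ℕ∞ :=
  ∑' k : ℕ, (Module.rank R (T.cohOf (2 * k : ℤ) X)).toENat

/-- Total odd Betti number, with value in `ℕ∞`. -/
noncomputable def oddB (X : Type) [TopologicalSpace X] : ℕ∞ :=
  ∑' k : ℕ, (Module.rank R (T.cohOf (2 * k + 1 : ℤ) X)).toENat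

/-- `χ(X) = χ(Y)`, both being defined (finite): encoded as
`b_even(X) + b_odd(Y) = b_odd(X) + b_even(Y) < ∞`. -/
def eulerEqE (X : Type) [TopologicalSpace X] (Y : Type) [TopologicalSpace Y] : Prop :=
  T.evenB X + T.oddB Y = T.oddB X + T.evenB Y ∧ T.evenB X + T.oddB Y ≠ ⊤

/-- `χ(X) ≥ χ(Y)` with the conventions `χ(X) ∈ ℤ ∪ {+∞}`, `χ(Y) ∈ ℤ ∪ {−∞}`: encoded as
`b_odd(X) + b_even(Y) ≤ b_even(X) + b_odd(Y)` in `ℕ∞`. -/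
def eulerGeE (X : Type) [TopologicalSpace X] (Y : Type) [TopologicalSpace Y] : Prop :=
  T.oddB X + T.evenB Y ≤ T.evenB X + T.oddB Y

/-- `χ(X) = 0`, with `χ(X)` defined (finite). -/
def eulerZeroE (X : Type) [TopologicalSpace X] : Prop :=
  T.evenB X = T.oddB X ∧ T.evenB X ≠ ⊤

end CechTheory

/-- An abstract Čech cohomology theory together with (relative) cup products. -/
structure CechRingTheory (R : Type) [CommRing R] extends CechTheory R where
  cup : ∀ {p q : ℤ} {X : TopCat.{0}} {A B : Set X},
      coh p X A → coh q X B → coh (p + q) X (A ∪ B)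
  cup_add_left : ∀ {p q : ℤ} {X : TopCat.{0}} {A B : Set X}
      (a a' : coh p X A) (b : coh q X B), cup (a + a') b = cup a b + cup a' b
  cup_add_right : ∀ {p q : ℤ} {X : TopCat.{0}} {A B : Set X}
      (a : coh p X A) (b b' : coh q X B), cup a (b + b') = cup a b + cup a b'
  coh_self_vanish : ∀ (n : ℤ) (X : TopCat.{0}), Subsingleton (coh n X (univ : Set X))
  cup_natural : ∀ {p q : ℤ} {X Y : TopCat.{0}} {A B : Set Y} {A' B' : Set X} (f : X ⟶ Y)
      (hA : A' ⊆ f ⁻¹' A) (hB : B' ⊆ f ⁻¹' B) (hU : A' ∪ B' ⊆ f ⁻¹' (A ∪ B))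
      (a : coh p Y A) (b : coh q Y B),
      map (p + q) f hU (cup a b) = cup (map p f hA a) (map q f hB b)

/-- An abstract Čech-type homology theory with coefficients in `R`. -/
structure CechHomologyTheory (R : Type) [CommRing R] : Type 1 where
  hgy : ℤ → TopCat.{0} → ModuleCat.{0} R
  map : ∀ (n : ℤ) {X Y : TopCat.{0}}, (X ⟶ Y) → (hgy n X ⟶ hgy n Y)
  map_id : ∀ (n : ℤ) (X : TopCat.{0}), map n (𝟙 X) = 𝟙 (hgy n X)
  map_comp : ∀ (n : ℤ) {X Y Z : TopCat.{0}} (f : X ⟶ Y) (g : Y ⟶ Z),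
      map n (f ≫ g) = map n f ≫ map n g
  homotopy_invariance : ∀ (n : ℤ) {X Y : TopCat.{0}} (f g : X ⟶ Y),
      ContinuousMap.Homotopic f.hom g.hom → map n f = map n g
  dim_iso : Nonempty ((hgy 0 (TopCat.of PUnit) : Type) ≃ₗ[R] R)
  dim_vanish : ∀ n : ℤ, n ≠ 0 → Subsingleton (hgy n (TopCat.of PUnit))

/-- Absolute Čech homology of a space. -/
def CechHomologyTheory.hgyOf {R : Type} [CommRing R] (T : CechHomologyTheory R)
    (n : ℤ) (X : Type) [TopologicalSpace X] : ModuleCat.{0} R :=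
  T.hgy n (TopCat.of X)

end Paper


namespace PaperAux

theorem quot_mk_eq_pred {X : Type} (P : X → Prop) (a b : X) :
    Quot.mk (fun a b => P a ∧ P b) a = Quot.mk (fun a b => P a ∧ P b) b ↔
      a = b ∨ (P a ∧ P b) := by
  rw [Quot.eq]
  constructor
  · intro h
    induction h with
    | rel x y h => exact Or.inr h
    | refl x => exact Or.inl rfl
    | symm x y _ ih =>
      rcases ih with rfl | ⟨h1, h2⟩
      exacts [Or.inl rfl, Or.inr ⟨h2, h1⟩]
    | trans x y z _ _ ih1 ih2 =>
      rcases ih1 with rfl | ⟨h1, h2⟩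
      · exact ih2
      · rcases ih2 with rfl | ⟨h3, h4⟩
        exacts [Or.inr ⟨h1, h2⟩, Or.inr ⟨h1, h4⟩]
  · rintro (rfl | h)
    exacts [.refl a, .rel _ _ h]

theorem quot_mk_eq_pair {X : Type} (x0 y0 : X) (a b : X) :
    Quot.mk (fun a b => a = x0 ∧ b = y0) a = Quot.mk (fun a b => a = x0 ∧ b = y0) b ↔
      a = b ∨ ((a = x0 ∨ a = y0) ∧ (b = x0 ∨ b = y0)) := by
  rw [Quot.eq]
  constructor
  · intro h
    induction h with
    | rel x y h => exact Or.inr ⟨Or.inl h.1, Or.inr h.2⟩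
    | refl x => exact Or.inl rfl
    | symm x y _ ih =>
      rcases ih with rfl | ⟨h1, h2⟩
      exacts [Or.inl rfl, Or.inr ⟨h2, h1⟩]
    | trans x y z _ _ ih1 ih2 =>
      rcases ih1 with rfl | ⟨h1, h2⟩
      · exact ih2
      · rcases ih2 with rfl | ⟨h3, h4⟩
        exacts [Or.inr ⟨h1, h2⟩, Or.inr ⟨h1, h4⟩]
  · rintro (rfl | ⟨h1, h2⟩)
    · exact .refl a
    · rcases h1 with rfl | rfl <;> rcases h2 with h2 | h2 <;> subst h2
      · exact .refl _
      · exact .rel _ _ ⟨rfl, rfl⟩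
      · exact .symm _ _ (.rel _ _ ⟨rfl, rfl⟩)
      · exact .refl _

theorem susp_mk_eq {X : Type} (p q : X × unitInterval) :
    Quot.mk (fun p q : X × unitInterval => p.2 = q.2 ∧ (p.2 = 0 ∨ p.2 = 1 ∨ p.1 = q.1)) p =
      Quot.mk (fun p q : X × unitInterval => p.2 = q.2 ∧ (p.2 = 0 ∨ p.2 = 1 ∨ p.1 = q.1)) q ↔
      p = q ∨ (p.2 = 0 ∧ q.2 = 0) ∨ (p.2 = 1 ∧ q.2 = 1) := by
  have h01 : (0 : unitInterval) ≠ 1 := by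
    intro h
    have := congrArg Subtype.val h
    norm_num at this
  rw [Quot.eq]
  constructor
  · intro h
    induction h with
    | rel x y h =>
      rcases h with ⟨h2, h0 | h1 | hfst⟩
      · exact Or.inr (Or.inl ⟨h0, h2 ▸ h0⟩)
      · exact Or.inr (Or.inr ⟨h1, h2 ▸ h1⟩)
      · exact Or.inl (Prod.ext hfst h2)
    | refl x => exact Or.inl rfl
    | symm x y _ ih =>
      rcases ih with rfl | ⟨h1, h2⟩ | ⟨h1, h2⟩
      exacts [Or.inl rfl, Or.inr (Or.inl ⟨h2, h1⟩), Or.inr (Or.inr ⟨h2, h1⟩)]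
    | trans x y z _ _ ih1 ih2 =>
      rcases ih1 with rfl | ⟨h1, h2⟩ | ⟨h1, h2⟩
      · exact ih2
      · rcases ih2 with rfl | ⟨h3, h4⟩ | ⟨h3, h4⟩
        exacts [Or.inr (Or.inl ⟨h1, h2⟩), Or.inr (Or.inl ⟨h1, h4⟩),
          absurd (h2.symm.trans h3) h01]
      · rcases ih2 with rfl | ⟨h3, h4⟩ | ⟨h3, h4⟩
        exacts [Or.inr (Or.inr ⟨h1, h2⟩), absurd (h3.symm.trans h2) h01,
          Or.inr (Or.inr ⟨h1, h4⟩)]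
  · rintro (rfl | ⟨h1, h2⟩ | ⟨h1, h2⟩)
    · exact .refl p
    · exact .rel _ _ ⟨h1.trans h2.symm, Or.inl h1⟩
    · exact .rel _ _ ⟨h1.trans h2.symm, Or.inr (Or.inl h1)⟩

theorem compactSpace_quot {X : Type} [TopologicalSpace X] [CompactSpace X]
    (r : X → X → Prop) : CompactSpace (Quot r) := by
  constructor
  have : (univ : Set (Quot r)) = Quot.mk r '' univ := by
    ext q
    simp only [image_univ, mem_univ, true_iff, mem_range]
    exact (Quot.exists_rep q).imp fun a h => h
  rw [this]
  exact isCompact_univ.image continuous_quot_mk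

theorem t2Space_quot_of_blobs {X : Type} [TopologicalSpace X] [NormalSpace X] [T1Space X]
    {r : X → X → Prop} {B0 B1 : Set X} (h0 : IsClosed B0) (h1 : IsClosed B1)
    (hd : ∀ x, x ∈ B0 → x ∈ B1 → False)
    (hr : ∀ a b, Quot.mk r a = Quot.mk r b ↔
      a = b ∨ (a ∈ B0 ∧ b ∈ B0) ∨ (a ∈ B1 ∧ b ∈ B1)) :
    T2Space (Quot r) := by
  classical
  constructor
  intro x y hxy
  obtain ⟨a, rfl⟩ := Quot.exists_rep x
  obtain ⟨b, rfl⟩ := Quot.exists_rep y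
  -- classes
  let cls : X → Set X := fun c =>
    insert c ((if c ∈ B0 then B0 else ∅) ∪ (if c ∈ B1 then B1 else ∅))
  have memcls : ∀ c z, Quot.mk r z = Quot.mk r c ↔ z ∈ cls c := by
    intro c z
    rw [hr]
    constructor
    · rintro (rfl | ⟨hz, hc⟩ | ⟨hz, hc⟩)
      · exact mem_insert _ _
      · exact Or.inr (Or.inl (by rw [if_pos hc]; exact hz))
      · exact Or.inr (Or.inr (by rw [if_pos hc]; exact hz))
    · rintro (rfl | hz | hz)
      · exact Or.inl rfl
      · by_cases hc : c ∈ B0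
        · rw [if_pos hc] at hz; exact Or.inr (Or.inl ⟨hz, hc⟩)
        · rw [if_neg hc] at hz; exact absurd hz (notMem_empty z)
      · by_cases hc : c ∈ B1
        · rw [if_pos hc] at hz; exact Or.inr (Or.inr ⟨hz, hc⟩)
        · rw [if_neg hc] at hz; exact absurd hz (notMem_empty z)
  have clscl : ∀ c, IsClosed (cls c) := by
    intro c
    show IsClosed (insert c _)
    rw [Set.insert_eq]
    refine IsClosed.union isClosed_singleton (IsClosed.union ?_ ?_) <;> split_ifs <;>
      first | exact h0 | exact h1 | exact isClosed_empty
  have hdisj : Disjoint (cls a) (cls b) := by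
    rw [Set.disjoint_left]
    intro z hza hzb
    exact hxy (((memcls a z).2 hza).symm.trans ((memcls b z).2 hzb))
  obtain ⟨U, V, hUo, hVo, hCaU, hCbV, hUV⟩ := normal_separation (clscl a) (clscl b) hdisj
  -- saturate
  let sat : Set X → Set X := fun U =>
    U \ ((if B0 ⊆ U then ∅ else B0) ∪ (if B1 ⊆ U then ∅ else B1))
  have sato : ∀ U, IsOpen U → IsOpen (sat U) := by
    intro U hU
    refine hU.sdiff (IsClosed.union ?_ ?_) <;> split_ifs <;>
      first | exact h0 | exact h1 | exact isClosed_empty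
  have satmem : ∀ c U, cls c ⊆ U → c ∈ sat U := by
    intro c U hsub
    refine ⟨hsub (mem_insert _ _), ?_⟩
    rintro (hc | hc)
    · split at hc
      · exact hc
      · rename_i hns
        refine hns fun z hz => hsub ?_
        exact Or.inr (Or.inl (by rw [if_pos hc]; exact hz))
    · split at hc
      · exact hc
      · rename_i hns
        refine hns fun z hz => hsub ?_
        exact Or.inr (Or.inr (by rw [if_pos hc]; exact hz))
  have satsat : ∀ U z w, z ∈ sat U → Quot.mk r w = Quot.mk r z → w ∈ sat U := by
    intro U z w hz hw
    rcases (hr w z).1 hw with rfl | ⟨hw0, hz0⟩ | ⟨hw1, hz1⟩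
    · exact hz
    · have hB0U : B0 ⊆ U := by
        by_contra hns
        exact hz.2 (Or.inl (by rw [if_neg hns]; exact hz0))
      refine ⟨hB0U hw0, ?_⟩
      rintro (hc | hc)
      · rw [if_pos hB0U] at hc; exact hc
      · split at hc
        · exact hc
        · exact hd w hw0 hc
    · have hB1U : B1 ⊆ U := by
        by_contra hns
        exact hz.2 (Or.inr (by rw [if_neg hns]; exact hz1))
      refine ⟨hB1U hw1, ?_⟩
      rintro (hc | hc)
      · split at hc
        · exact hc
        · exact hd w hc hw1
      · rw [if_pos hB1U] at hc; exact hc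
  have satsub : ∀ U, sat U ⊆ U := fun U => diff_subset
  -- the open sets downstairs
  let OU : Set (Quot r) := {q | ∃ z ∈ sat U, Quot.mk r z = q}
  let OV : Set (Quot r) := {q | ∃ z ∈ sat V, Quot.mk r z = q}
  have preU : Quot.mk r ⁻¹' OU = sat U := by
    ext z
    constructor
    · rintro ⟨w, hw, hwz⟩
      exact satsat U w z hw hwz.symm
    · intro hz; exact ⟨z, hz, rfl⟩
  have preV : Quot.mk r ⁻¹' OV = sat V := by
    ext z
    constructor
    · rintro ⟨w, hw, hwz⟩
      exact satsat V w z hw hwz.symm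
    · intro hz; exact ⟨z, hz, rfl⟩
  refine ⟨OU, OV, ?_, ?_, ⟨a, satmem a U hCaU, rfl⟩, ⟨b, satmem b V hCbV, rfl⟩, ?_⟩
  · rw [isOpen_coinduced (f := Quot.mk r)]
    rw [preU]; exact sato U hUo
  · rw [isOpen_coinduced (f := Quot.mk r)]
    rw [preV]; exact sato V hVo
  · rw [Set.disjoint_left]
    rintro q ⟨z, hz, rfl⟩ ⟨w, hw, hwq⟩
    have hwU : w ∈ sat U := satsat U z w hz hwq
    exact Set.disjoint_left.1 hUV (satsub U hwU) (satsub V hw)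

theorem isQuotientMap_id_prod {X Y : Type} [TopologicalSpace X] [TopologicalSpace Y]
    [CompactSpace X] [T2Space Y] {f : X → Y} (hc : Continuous f) (hs : Function.Surjective f) :
    IsQuotientMap (fun q : unitInterval × X => (q.1, f q.2)) := by
  have hcont : Continuous (fun q : unitInterval × X => (q.1, f q.2)) :=
    continuous_fst.prodMk (hc.comp continuous_snd)
  refine IsClosedMap.isQuotientMap (hcont.isClosedMap) hcont ?_
  rintro ⟨τ, y⟩
  obtain ⟨x, rfl⟩ := hs y
  exact ⟨(τ, x), rfl⟩

theorem isQuotientMap_prod_sum {X Y : Type} [TopologicalSpace X] [TopologicalSpace Y]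
    [CompactSpace X] [CompactSpace Y] [T2Space X] [T2Space Y] :
    IsQuotientMap (Sum.elim
      (fun q : unitInterval × X => ((q.1, Sum.inl q.2) : unitInterval × (X ⊕ Y)))
      (fun q : unitInterval × Y => ((q.1, Sum.inr q.2) : unitInterval × (X ⊕ Y)))) := by
  have hc : Continuous (Sum.elim
      (fun q : unitInterval × X => ((q.1, Sum.inl q.2) : unitInterval × (X ⊕ Y)))
      (fun q : unitInterval × Y => ((q.1, Sum.inr q.2) : unitInterval × (X ⊕ Y)))) :=
    (continuous_fst.prodMk (continuous_inl.comp continuous_snd)).sumElim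
      (continuous_fst.prodMk (continuous_inr.comp continuous_snd))
  refine IsClosedMap.isQuotientMap (hc.isClosedMap) hc ?_
  rintro ⟨τ, x | y⟩
  exacts [⟨Sum.inl (τ, x), rfl⟩, ⟨Sum.inr (τ, y), rfl⟩]

/-! ### The logistic parametrisation of `(0,1)` -/

def sig (t : ℝ) : ℝ := 1 / (1 + Real.exp (-t))

def tau (u : ℝ) : ℝ := Real.log u - Real.log (1 - u)

lemma sig_pos (t : ℝ) : 0 < sig t := by
  unfold sig
  positivity

lemma sig_lt_one (t : ℝ) : sig t < 1 := by
  unfold sig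
  rw [div_lt_one (by positivity)]
  linarith [Real.exp_pos (-t)]

lemma sig_mem (t : ℝ) : sig t ∈ Set.Ioo (0:ℝ) 1 := ⟨sig_pos t, sig_lt_one t⟩

lemma tau_sig (t : ℝ) : tau (sig t) = t := by
  have h1 : (0:ℝ) < 1 + Real.exp (-t) := by positivity
  unfold tau sig
  rw [show (1:ℝ) - 1/(1+Real.exp (-t)) = Real.exp (-t)/(1+Real.exp (-t)) by field_simp; ring,
    one_div, Real.log_inv, Real.log_div (Real.exp_ne_zero _) h1.ne', Real.log_exp]
  ring

lemma sig_tau {u : ℝ} (h0 : 0 < u) (h1 : u < 1) : sig (tau u) = u := by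
  unfold sig tau
  rw [show -(Real.log u - Real.log (1-u)) = Real.log ((1-u)/u) by
      rw [Real.log_div (by linarith) h0.ne']; ring,
    Real.exp_log (div_pos (by linarith) h0)]
  rw [show (1:ℝ) + (1-u)/u = 1/u by field_simp; ring]
  simp

lemma tau_strictMonoOn : StrictMonoOn tau (Set.Ioo (0:ℝ) 1) := by
  intro a ha b hb hab
  unfold tau
  have l1 : Real.log a < Real.log b := Real.log_lt_log ha.1 hab
  have l2 : Real.log (1-b) < Real.log (1-a) := by
    apply Real.log_lt_log (by linarith [hb.2])
    linarith
  linarith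

lemma continuousAt_tau {u : ℝ} (h0 : 0 < u) (h1 : u < 1) : ContinuousAt tau u := by
  unfold tau
  exact (Real.continuousAt_log h0.ne').sub
    ((Real.continuousAt_log (by intro h; nlinarith [h] : (1:ℝ) - u ≠ 0)).comp
      ((continuous_const.sub continuous_id).continuousAt))

end PaperAux

set_option linter.unusedSectionVars false
namespace Paper
section Core

variable (S : Type) [TopologicalSpace S]

/-- The space `ΣS` with the two cone points identified; homeomorphic to the one-point
compactification of `S × ℝ`. -/
def ZT : Type := Quot fun p q : S × unitInterval =>
  ((fun p : S × unitInterval => p.2 = 0 ∨ p.2 = 1) p) ∧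
  ((fun p : S × unitInterval => p.2 = 0 ∨ p.2 = 1) q)

instance : TopologicalSpace (ZT S) := inferInstanceAs (TopologicalSpace (Quot _))

def mkZ : S × unitInterval → ZT S := Quot.mk _

lemma continuous_mkZ : Continuous (mkZ S) := continuous_quot_mk

lemma mkZ_eq_iff (p q : S × unitInterval) :
    mkZ S p = mkZ S q ↔ p = q ∨ ((p.2 = 0 ∨ p.2 = 1) ∧ (q.2 = 0 ∨ q.2 = 1)) :=
  PaperAux.quot_mk_eq_pred (fun p : S × unitInterval => p.2 = 0 ∨ p.2 = 1) p q

lemma mkZ_bdry {p q : S × unitInterval} (hp : p.2 = 0 ∨ p.2 = 1) (hq : q.2 = 0 ∨ q.2 = 1) :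
    mkZ S p = mkZ S q := Quot.sound ⟨hp, hq⟩

def mkS : S × unitInterval → Susp S := Quot.mk _

lemma continuous_mkS : Continuous (mkS S) := continuous_quot_mk

lemma mkS_eq_iff (p q : S × unitInterval) :
    mkS S p = mkS S q ↔ p = q ∨ (p.2 = 0 ∧ q.2 = 0) ∨ (p.2 = 1 ∧ q.2 = 1) :=
  PaperAux.susp_mk_eq p q

lemma mkS_zero (s s' : S) : mkS S (s, 0) = mkS S (s', 0) :=
  Quot.sound ⟨rfl, Or.inl rfl⟩

lemma mkS_one (s s' : S) : mkS S (s, 1) = mkS S (s', 1) :=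
  Quot.sound ⟨rfl, Or.inr (Or.inl rfl)⟩

variable {S} (s₀ : S)

def inlW : Susp S → Wedge (Susp S) Circle (suspSouth S s₀) 1 := fun x => Quot.mk _ (Sum.inl x)

def inrW : Circle → Wedge (Susp S) Circle (suspSouth S s₀) 1 := fun z => Quot.mk _ (Sum.inr z)

lemma continuous_inlW : Continuous (inlW s₀) := continuous_quot_mk.comp continuous_inl

lemma continuous_inrW : Continuous (inrW s₀) := continuous_quot_mk.comp continuous_inr

lemma suspSouth_def (s : S) : suspSouth S s = mkS S (s, 0) := rfl

lemma inlW_base : inlW s₀ (suspSouth S s₀) = inrW s₀ 1 := Quot.sound ⟨rfl, rfl⟩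

lemma inlW_south (s : S) : inlW s₀ (mkS S (s, 0)) = inrW s₀ 1 := by
  rw [mkS_zero S s s₀, ← suspSouth_def, inlW_base]

/-! ### The interval parametrisation -/

def projI : ℝ → unitInterval := Set.projIcc 0 1 zero_le_one

lemma continuous_projI : Continuous projI := continuous_projIcc

lemma projI_coe (u : unitInterval) : projI u = u := by
  simp [projI, Set.projIcc_of_mem zero_le_one u.2]

lemma projI_zero : projI 0 = 0 := by
  simp [projI, Set.projIcc_left]

lemma projI_one : projI 1 = 1 := by
  simp [projI, Set.projIcc_right]

lemma projI_nonpos {x : ℝ} (h : x ≤ 0) : projI x = 0 := by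
  unfold projI
  rw [Set.projIcc_of_le_left _ h]
  rfl

lemma projI_one_le {x : ℝ} (h : 1 ≤ x) : projI x = 1 := by
  unfold projI
  rw [Set.projIcc_of_right_le _ h]
  rfl

lemma coe_projI {x : ℝ} (h0 : 0 ≤ x) (h1 : x ≤ 1) : (projI x : ℝ) = x := by
  simp [projI, Set.projIcc_of_mem zero_le_one ⟨h0, h1⟩]

/-! ### The circle parametrisation -/

def pmap : unitInterval → Circle := fun u => Circle.exp (2 * Real.pi * u)

lemma continuous_pmap : Continuous pmap :=
  Circle.exp.continuous.comp (continuous_const.mul continuous_subtype_val)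

lemma pmap_zero : pmap 0 = 1 := by
  simp [pmap]

lemma pmap_one : pmap 1 = 1 := by
  simp [pmap]

def wmap : Circle → unitInterval := fun z =>
  projI (if 0 ≤ Complex.arg z then Complex.arg z / (2 * Real.pi)
         else Complex.arg z / (2 * Real.pi) + 1)

lemma wmap_one : wmap 1 = 0 := by
  simp [wmap, Complex.arg_one, projI_nonpos]

lemma pmap_wmap (z : Circle) : pmap (wmap z) = z := by
  have hpi := Real.pi_pos
  have h2pi : (2 : ℝ) * Real.pi ≠ 0 := by positivity
  have harg1 : Complex.arg z ≤ Real.pi := Complex.arg_le_pi z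
  have harg0 : -Real.pi < Complex.arg z := Complex.neg_pi_lt_arg z
  unfold wmap pmap
  split_ifs with h
  · rw [coe_projI (by positivity) (by
      rw [div_le_one (by positivity)]; nlinarith)]
    rw [mul_div_cancel₀ _ h2pi]
    exact Circle.exp_arg z
  · push_neg at h
    rw [coe_projI (by
        have : -1/2 < Complex.arg z / (2*Real.pi) := by
          rw [div_lt_div_iff₀ (by norm_num) (by positivity)] at *
          nlinarith
        linarith) (by
        have : Complex.arg z / (2*Real.pi) < 0 := by
          apply div_neg_of_neg_of_pos h (by positivity)
        linarith)]
    rw [mul_add, mul_div_cancel₀ _ h2pi, mul_one, Circle.exp_add, Circle.exp_two_pi, mul_one]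
    exact Circle.exp_arg z

lemma wmap_pmap (u : unitInterval) : wmap (pmap u) = u ∨ ((u : ℝ) = 1 ∧ wmap (pmap u) = 0) := by
  have hpi := Real.pi_pos
  have h2pi : (2 : ℝ) * Real.pi ≠ 0 := by positivity
  have hu0 : (0:ℝ) ≤ u := u.2.1
  have hu1 : (u:ℝ) ≤ 1 := u.2.2
  rcases le_or_gt (u : ℝ) (1/2) with h | h
  · left
    have harg : Complex.arg (pmap u) = 2 * Real.pi * u := by
      apply Circle.arg_exp (by nlinarith) (by nlinarith)
    unfold wmap
    rw [harg, if_pos (by positivity), mul_comm, mul_div_assoc, div_self h2pi, mul_one]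
    exact projI_coe u
  · rcases lt_or_eq_of_le hu1 with h1 | h1
    · left
      have hper : pmap u = Circle.exp (2 * Real.pi * u - 2 * Real.pi) := by
        unfold pmap
        rw [Circle.exp_sub_two_pi]
      have harg : Complex.arg (pmap u) = 2 * Real.pi * u - 2 * Real.pi := by
        rw [hper]
        apply Circle.arg_exp (by nlinarith) (by nlinarith)
      unfold wmap
      rw [harg, if_neg (by push_neg; nlinarith)]
      have : (2 * Real.pi * ↑u - 2 * Real.pi) / (2 * Real.pi) + 1 = u := by
        field_simp; ring
      rw [this]
      exact projI_coe u
    · right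
      refine ⟨h1, ?_⟩
      have : pmap u = 1 := by
        unfold pmap
        rw [show ((u:ℝ)) = 1 from h1, mul_one, Circle.exp_two_pi]
      rw [this, wmap_one]

/-! ### Compactness and separation of the quotients -/

lemma isClosed_bdry : IsClosed {p : S × unitInterval | p.2 = 0 ∨ p.2 = 1} := by
  have : {p : S × unitInterval | p.2 = 0 ∨ p.2 = 1} =
      Prod.snd ⁻¹' ({0} ∪ {1} : Set unitInterval) := by
    ext p
    simp only [Set.mem_preimage, Set.mem_union, Set.mem_singleton_iff, Set.mem_setOf_eq]
  rw [this]
  exact (isClosed_singleton.union isClosed_singleton).preimage continuous_snd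

lemma compactSpace_ZT [CompactSpace S] : CompactSpace (ZT S) :=
  PaperAux.compactSpace_quot _

lemma t2Space_ZT [CompactSpace S] [T2Space S] : T2Space (ZT S) := by
  refine PaperAux.t2Space_quot_of_blobs (isClosed_bdry (S := S)) (isClosed_empty (X := S × unitInterval))
    (fun x _ hx => hx) (fun a b => ?_)
  show mkZ S a = mkZ S b ↔ _
  rw [mkZ_eq_iff]
  simp only [Set.mem_setOf_eq, Set.mem_empty_iff_false, false_and, and_false, or_false]

lemma compactSpace_Susp [CompactSpace S] : CompactSpace (Susp S) :=
  PaperAux.compactSpace_quot _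

lemma t2Space_Susp [CompactSpace S] [T2Space S] : T2Space (Susp S) := by
  have h0 : IsClosed {p : S × unitInterval | p.2 = 0} :=
    (isClosed_singleton (x := (0 : unitInterval))).preimage continuous_snd
  have h1 : IsClosed {p : S × unitInterval | p.2 = 1} :=
    (isClosed_singleton (x := (1 : unitInterval))).preimage continuous_snd
  refine PaperAux.t2Space_quot_of_blobs h0 h1 (fun x hx0 hx1 => ?_) (fun a b => ?_)
  · have : (0 : unitInterval) = 1 := hx0.symm.trans hx1
    have := congrArg Subtype.val this
    norm_num at this
  · show mkS S a = mkS S b ↔ _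
    rw [mkS_eq_iff]
    simp only [Set.mem_setOf_eq]

lemma compactSpace_W [CompactSpace S] [T2Space S] :
    CompactSpace (Wedge (Susp S) Circle (suspSouth S s₀) 1) := by
  haveI := compactSpace_Susp (S := S)
  exact PaperAux.compactSpace_quot _

lemma t2Space_W [CompactSpace S] [T2Space S] :
    T2Space (Wedge (Susp S) Circle (suspSouth S s₀) 1) := by
  haveI := compactSpace_Susp (S := S)
  haveI := t2Space_Susp (S := S)
  refine PaperAux.t2Space_quot_of_blobs
    (B0 := {Sum.inl (suspSouth S s₀), Sum.inr (1 : Circle)}) (B1 := ∅)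
    (Set.Finite.isClosed (by simp)) isClosed_empty (fun x _ hx => hx) (fun a b => ?_)
  rw [PaperAux.quot_mk_eq_pair]
  simp only [Set.mem_insert_iff, Set.mem_singleton_iff, Set.mem_empty_iff_false, false_and,
    and_false, or_false]

/-! ### The map `f : ZT S → W` -/

def fAux : S × unitInterval → Wedge (Susp S) Circle (suspSouth S s₀) 1 := fun p =>
  if ((p.2 : ℝ)) ≤ 1/3 then inlW s₀ (mkS S (p.1, projI (3 * (p.2 : ℝ))))
  else if ((p.2 : ℝ)) ≤ 2/3 then inlW s₀ (mkS S (s₀, projI (2 - 3 * (p.2 : ℝ))))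
  else inrW s₀ (pmap (projI (3 * (p.2 : ℝ) - 2)))

lemma continuous_fAux : Continuous (fAux s₀) := by
  unfold fAux
  have hsnd : Continuous fun p : S × unitInterval => ((p.2 : ℝ)) :=
    continuous_subtype_val.comp continuous_snd
  refine Continuous.if_le ?_ ?_ hsnd continuous_const ?_
  · exact (continuous_inlW s₀).comp ((continuous_mkS S).comp (continuous_fst.prodMk
      (continuous_projI.comp (continuous_const.mul hsnd))))
  · refine Continuous.if_le ?_ ?_ hsnd continuous_const ?_
    · exact (continuous_inlW s₀).comp ((continuous_mkS S).comp (continuous_const.prodMk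
        (continuous_projI.comp (continuous_const.sub (continuous_const.mul hsnd)))))
    · exact (continuous_inrW s₀).comp (continuous_pmap.comp (continuous_projI.comp
        ((continuous_const.mul hsnd).sub continuous_const)))
    · intro p hp
      rw [show (2:ℝ) - 3 * (p.2:ℝ) = 0 by rw [hp]; norm_num,
        show (3:ℝ) * (p.2:ℝ) - 2 = 0 by rw [hp]; norm_num, projI_zero, pmap_zero]
      exact inlW_south s₀ s₀
  · intro p hp
    rw [if_pos (show ((p.2:ℝ)) ≤ 2/3 by rw [hp]; norm_num),
      show (3:ℝ) * (p.2:ℝ) = 1 by rw [hp]; norm_num,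
      show (2:ℝ) - 1 = 1 by norm_num, projI_one]
    exact congrArg (inlW s₀) (mkS_one S p.1 s₀)

lemma fAux_bdry (s : S) (u : unitInterval) (hu : u = 0 ∨ u = 1) :
    fAux s₀ (s, u) = inrW s₀ 1 := by
  rcases hu with rfl | rfl
  · unfold fAux
    rw [if_pos (by norm_num)]
    simp only []
    rw [show (3:ℝ) * ((0 : unitInterval):ℝ) = 0 by norm_num, projI_zero]
    exact inlW_south s₀ s
  · unfold fAux
    rw [if_neg (by norm_num), if_neg (by norm_num)]
    simp only []
    rw [show (3:ℝ) * ((1 : unitInterval):ℝ) - 2 = 1 by norm_num, projI_one, pmap_one]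

def fW : ZT S → Wedge (Susp S) Circle (suspSouth S s₀) 1 :=
  Quot.lift (fAux s₀) (by
    rintro p q ⟨hp, hq⟩
    have h1 : fAux s₀ (p.1, p.2) = inrW s₀ 1 := fAux_bdry s₀ p.1 p.2 hp
    have h2 : fAux s₀ (q.1, q.2) = inrW s₀ 1 := fAux_bdry s₀ q.1 q.2 hq
    rw [show p = (p.1, p.2) from rfl, show q = (q.1, q.2) from rfl, h1, h2])

lemma continuous_fW : Continuous (fW s₀) :=
  continuous_quot_lift _ (continuous_fAux s₀)

lemma fW_mkZ (p : S × unitInterval) : fW s₀ (mkZ S p) = fAux s₀ p := rfl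

/-! ### The map `g : W → ZT S` -/

def gSusp : Susp S → ZT S :=
  Quot.lift (mkZ S) (by
    rintro p q ⟨h2, h0 | h1 | hfst⟩
    · exact mkZ_bdry S (Or.inl h0) (Or.inl (h2 ▸ h0))
    · exact mkZ_bdry S (Or.inr h1) (Or.inr (h2 ▸ h1))
    · exact congrArg (mkZ S) (Prod.ext hfst h2))

lemma continuous_gSusp : Continuous (gSusp (S := S)) :=
  continuous_quot_lift _ (continuous_mkZ S)

lemma gSusp_mkS (p : S × unitInterval) : gSusp (mkS S p) = mkZ S p := rfl

lemma isQuotientMap_pmap : IsQuotientMap pmap :=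
  IsClosedMap.isQuotientMap (continuous_pmap.isClosedMap) continuous_pmap
    (fun z => ⟨wmap z, pmap_wmap z⟩)

def gCirc : Circle → ZT S := fun z => mkZ S (s₀, wmap z)

lemma continuous_gCirc : Continuous (gCirc s₀) := by
  rw [isQuotientMap_pmap.continuous_iff]
  have : (gCirc s₀ ∘ pmap) = fun u : unitInterval => mkZ S (s₀, u) := by
    funext u
    show mkZ S (s₀, wmap (pmap u)) = mkZ S (s₀, u)
    rcases wmap_pmap u with h | ⟨h1, h2⟩
    · rw [h]
    · rw [h2]
      exact mkZ_bdry S (Or.inl rfl) (Or.inr (Subtype.ext h1))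
  rw [this]
  exact (continuous_mkZ S).comp (continuous_const.prodMk continuous_id)

def gW : Wedge (Susp S) Circle (suspSouth S s₀) 1 → ZT S :=
  Quot.lift (Sum.elim gSusp (gCirc s₀)) (by
    rintro a b ⟨rfl, rfl⟩
    show gSusp (suspSouth S s₀) = gCirc s₀ 1
    show mkZ S (s₀, (0:unitInterval)) = mkZ S (s₀, wmap 1)
    rw [wmap_one])

lemma continuous_gW : Continuous (gW s₀) :=
  continuous_quot_lift _ (continuous_gSusp.sumElim (continuous_gCirc s₀))

lemma gW_inlW (x : Susp S) : gW s₀ (inlW s₀ x) = gSusp x := rfl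

lemma gW_inrW (z : Circle) : gW s₀ (inrW s₀ z) = gCirc s₀ z := rfl

/-! ### The homotopy `id ≃ g ∘ f` on `ZT S` -/

def HAform (τ : unitInterval) (p : S × unitInterval) : ZT S :=
  if (τ : ℝ) ≤ 1/2 then mkZ S (p.1, projI ((1 + 4*(τ:ℝ)) * (p.2:ℝ)))
  else if (p.2:ℝ) ≤ 1/3 then mkZ S (p.1, projI (3*(p.2:ℝ)))
  else if (p.2:ℝ) ≤ 2/3 then mkZ S (s₀, projI (max (2 - 3*(p.2:ℝ)) (2 - 2*(τ:ℝ))))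
  else mkZ S (s₀, projI (max (3*(p.2:ℝ) - 2) (2 - 2*(τ:ℝ))))

lemma HAform_bdry (τ : unitInterval) (p : S × unitInterval) (hp : p.2 = 0 ∨ p.2 = 1) :
    HAform s₀ τ p = mkZ S (s₀, 0) := by
  unfold HAform
  rcases hp with h | h
  · have h' : (p.2 : ℝ) = 0 := by rw [h]; norm_num
    split_ifs with h1 h2
    · rw [show (1 + 4*(τ:ℝ)) * (p.2:ℝ) = 0 by rw [h']; ring, projI_zero]
      exact mkZ_bdry S (Or.inl rfl) (Or.inl rfl)
    · rw [show (3:ℝ)*(p.2:ℝ) = 0 by rw [h']; ring, projI_zero]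
      exact mkZ_bdry S (Or.inl rfl) (Or.inl rfl)
    · exact absurd (by rw [h']; norm_num) h2
    · exact absurd (by rw [h']; norm_num) h2
  · have h' : (p.2 : ℝ) = 1 := by rw [h]; norm_num
    have hτ : (0:ℝ) ≤ (τ:ℝ) := τ.2.1
    split_ifs with h1 h2 h3
    · rw [projI_one_le (by rw [h']; nlinarith)]
      exact mkZ_bdry S (Or.inr rfl) (Or.inl rfl)
    · exact absurd h2 (by rw [h']; norm_num)
    · exact absurd h3 (by rw [h']; norm_num)
    · rw [projI_one_le (le_max_of_le_left (by rw [h']; norm_num))]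
      exact mkZ_bdry S (Or.inr rfl) (Or.inl rfl)

lemma continuous_HAform_uncurried [CompactSpace S] [T2Space S] :
    Continuous (fun q : unitInterval × (S × unitInterval) => HAform s₀ q.1 q.2) := by
  unfold HAform
  have hτ : Continuous fun q : unitInterval × (S × unitInterval) => ((q.1 : ℝ)) :=
    continuous_subtype_val.comp continuous_fst
  have hu : Continuous fun q : unitInterval × (S × unitInterval) => ((q.2.2 : ℝ)) :=
    continuous_subtype_val.comp (continuous_snd.comp continuous_snd)
  have hs : Continuous fun q : unitInterval × (S × unitInterval) => q.2.1 :=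
    continuous_fst.comp continuous_snd
  refine Continuous.if_le ?_ ?_ hτ continuous_const ?_
  · exact (continuous_mkZ S).comp (hs.prodMk (continuous_projI.comp
      ((continuous_const.add (continuous_const.mul hτ)).mul hu)))
  · refine Continuous.if_le ?_ ?_ hu continuous_const ?_
    · exact (continuous_mkZ S).comp (hs.prodMk (continuous_projI.comp
        (continuous_const.mul hu)))
    · refine Continuous.if_le ?_ ?_ hu continuous_const ?_
      · exact (continuous_mkZ S).comp (continuous_const.prodMk (continuous_projI.comp
          (((continuous_const.sub (continuous_const.mul hu))).max
            (continuous_const.sub (continuous_const.mul hτ)))))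
      · exact (continuous_mkZ S).comp (continuous_const.prodMk (continuous_projI.comp
          ((((continuous_const.mul hu).sub continuous_const)).max
            (continuous_const.sub (continuous_const.mul hτ)))))
      · -- u = 2/3 : both branches agree
        intro q hq
        rw [show (2:ℝ) - 3*(q.2.2:ℝ) = 0 by rw [hq]; ring,
          show (3:ℝ)*(q.2.2:ℝ) - 2 = 0 by rw [hq]; ring]
    · -- u = 1/3
      intro q hq
      rw [if_pos (show ((q.2.2:ℝ)) ≤ 2/3 by rw [hq]; norm_num),
        show (3:ℝ)*(q.2.2:ℝ) = 1 by rw [hq]; ring, projI_one,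
        show (2:ℝ) - 1 = 1 by norm_num,
        projI_one_le (le_max_of_le_left le_rfl)]
      exact mkZ_bdry S (Or.inr rfl) (Or.inr rfl)
  · -- τ = 1/2
    intro q hq
    have h3 : (1:ℝ) + 4*(q.1:ℝ) = 3 := by rw [hq]; norm_num
    rw [h3]
    by_cases h1 : ((q.2.2:ℝ)) ≤ 1/3
    · rw [if_pos h1]
    · rw [if_neg h1]
      push_neg at h1
      have hmax : (2:ℝ) - 2*(q.1:ℝ) = 1 := by rw [hq]; norm_num
      by_cases h2 : ((q.2.2:ℝ)) ≤ 2/3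
      · rw [if_pos h2, hmax, projI_one_le (le_max_of_le_right le_rfl),
          projI_one_le (by nlinarith)]
        exact mkZ_bdry S (Or.inr rfl) (Or.inr rfl)
      · rw [if_neg h2, hmax, projI_one_le (le_max_of_le_right le_rfl),
          projI_one_le (by push_neg at h2; nlinarith)]
        exact mkZ_bdry S (Or.inr rfl) (Or.inr rfl)

def homA [CompactSpace S] [T2Space S] :
    ContinuousMap.Homotopy (ContinuousMap.id (ZT S))
      ((ContinuousMap.mk (gW s₀) (continuous_gW s₀)).comp
        (ContinuousMap.mk (fW s₀) (continuous_fW s₀))) where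
  toFun := fun q => Quot.lift (fun p => HAform s₀ q.1 p)
    (by
      rintro p p' ⟨hp, hp'⟩
      show HAform s₀ q.1 p = HAform s₀ q.1 p'
      rw [HAform_bdry s₀ q.1 p hp, HAform_bdry s₀ q.1 p' hp']) q.2
  continuous_toFun := by
    haveI := t2Space_ZT (S := S)
    rw [(PaperAux.isQuotientMap_id_prod (continuous_mkZ S)
      (fun z => Quot.exists_rep z)).continuous_iff]
    exact continuous_HAform_uncurried s₀
  map_zero_left := by
    intro z
    obtain ⟨⟨s, u⟩, rfl⟩ := Quot.exists_rep z
    show HAform s₀ 0 (s, u) = mkZ S (s, u)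
    unfold HAform
    rw [if_pos (by norm_num)]
    simp only []
    rw [show ((1:ℝ) + 4*(((0:unitInterval)):ℝ)) * (u:ℝ) = (u:ℝ) by norm_num, projI_coe]
  map_one_left := by
    intro z
    obtain ⟨⟨s, u⟩, rfl⟩ := Quot.exists_rep z
    show HAform s₀ 1 (s, u) = gW s₀ (fW s₀ (mkZ S (s, u)))
    rw [fW_mkZ]
    unfold HAform fAux
    have hu0 : (0:ℝ) ≤ (u:ℝ) := u.2.1
    rw [if_neg (by norm_num)]
    simp only []
    have hone : (2:ℝ) - 2*(((1:unitInterval)):ℝ) = 0 := by norm_num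
    by_cases h1 : ((u:ℝ)) ≤ 1/3
    · rw [if_pos h1, if_pos h1]
      rfl
    · rw [if_neg h1, if_neg h1]
      push_neg at h1
      by_cases h2 : ((u:ℝ)) ≤ 2/3
      · rw [if_pos h2, if_pos h2, hone, max_eq_left (by nlinarith)]
        rfl
      · rw [if_neg h2, if_neg h2, hone, max_eq_left (by push_neg at h2; nlinarith)]
        push_neg at h2
        show mkZ S (s₀, projI (3*(u:ℝ) - 2)) = gW s₀ (inrW s₀ (pmap (projI (3*(u:ℝ) - 2))))
        rw [gW_inrW]
        show mkZ S (s₀, projI (3*(u:ℝ) - 2)) = mkZ S (s₀, wmap (pmap (projI (3*(u:ℝ) - 2))))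
        rcases wmap_pmap (projI (3*(u:ℝ) - 2)) with h | ⟨hh1, hh2⟩
        · rw [h]
        · rw [hh2]
          exact mkZ_bdry S (Or.inr (Subtype.ext hh1)) (Or.inl rfl)

/-! ### The homotopy `id ≃ f ∘ g` on the wedge -/

def T0 : ℝ → Wedge (Susp S) Circle (suspSouth S s₀) 1 := fun w =>
  if w ≤ 1/2 then inlW s₀ (mkS S (s₀, projI (1 - 2*w)))
  else inrW s₀ (pmap (projI (2*w - 1)))

lemma continuous_T0 : Continuous (T0 s₀) := by
  unfold T0
  refine Continuous.if_le ?_ ?_ continuous_id continuous_const ?_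
  · exact (continuous_inlW s₀).comp ((continuous_mkS S).comp (continuous_const.prodMk
      (continuous_projI.comp (continuous_const.sub (continuous_const.mul continuous_id)))))
  · exact (continuous_inrW s₀).comp (continuous_pmap.comp (continuous_projI.comp
      ((continuous_const.mul continuous_id).sub continuous_const)))
  · intro w hw
    rw [show (1:ℝ) - 2*w = 0 by rw [hw]; ring, show (2:ℝ)*w - 1 = 0 by rw [hw]; ring,
      projI_zero, pmap_zero]
    exact inlW_south s₀ s₀

def HBs (τ : unitInterval) (p : S × unitInterval) : Wedge (Susp S) Circle (suspSouth S s₀) 1 :=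
  if (p.2:ℝ) ≤ 1 - 2*(τ:ℝ)/3 then
    inlW s₀ (mkS S (p.1, projI ((p.2:ℝ) / (1 - 2*(τ:ℝ)/3))))
  else T0 s₀ ((3/2)*(τ:ℝ)*((p.2:ℝ) - (1 - 2*(τ:ℝ)/3)))

lemma aux_denom_pos (τ : unitInterval) : (0:ℝ) < 1 - 2*(τ:ℝ)/3 := by
  have := τ.2.2
  nlinarith [τ.2.1]

lemma HBs_zero (τ : unitInterval) (s : S) : HBs s₀ τ (s, 0) = inrW s₀ 1 := by
  unfold HBs
  rw [if_pos (show ((0:unitInterval):ℝ) ≤ 1 - 2*(τ:ℝ)/3 by simpa using (aux_denom_pos τ).le)]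
  simp only []
  rw [show ((0:unitInterval):ℝ) / (1 - 2*(τ:ℝ)/3) = 0 by norm_num, projI_zero]
  exact inlW_south s₀ s

lemma HBs_resp (τ : unitInterval) : ∀ p q : S × unitInterval,
    (p.2 = q.2 ∧ (p.2 = 0 ∨ p.2 = 1 ∨ p.1 = q.1)) → HBs s₀ τ p = HBs s₀ τ q := by
  rintro ⟨s, u⟩ ⟨s', u'⟩ ⟨h2, h0 | h1 | hfst⟩
  · simp only [] at h2 h0
    subst h2; subst h0
    rw [HBs_zero, HBs_zero]
  · simp only [] at h2 h1
    subst h2; subst h1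
    unfold HBs
    by_cases hc : ((1:unitInterval):ℝ) ≤ 1 - 2*(τ:ℝ)/3
    · rw [if_pos hc, if_pos hc]
      have : projI (((1:unitInterval):ℝ) / (1 - 2*(τ:ℝ)/3)) = 1 := by
        apply projI_one_le
        have h1 : ((1:unitInterval):ℝ) = 1 := by norm_num
        rw [h1, le_div_iff₀ (aux_denom_pos τ), one_mul]
        nlinarith [τ.2.1]
      rw [this]
      exact congrArg (inlW s₀) (mkS_one S s s')
    · rw [if_neg hc, if_neg hc]
  · simp only [] at h2 hfst
    subst h2; subst hfst
    rfl

lemma continuous_HBs_uncurried : Continuous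
    (fun q : unitInterval × (S × unitInterval) => HBs s₀ q.1 q.2) := by
  unfold HBs
  have hτ : Continuous fun q : unitInterval × (S × unitInterval) => ((q.1 : ℝ)) :=
    continuous_subtype_val.comp continuous_fst
  have hu : Continuous fun q : unitInterval × (S × unitInterval) => ((q.2.2 : ℝ)) :=
    continuous_subtype_val.comp (continuous_snd.comp continuous_snd)
  have hs : Continuous fun q : unitInterval × (S × unitInterval) => q.2.1 :=
    continuous_fst.comp continuous_snd
  have hdenom : Continuous fun q : unitInterval × (S × unitInterval) =>
      (1 - 2*(q.1:ℝ)/3) := continuous_const.sub ((continuous_const.mul hτ).div_const 3)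
  refine Continuous.if_le ?_ ?_ hu hdenom ?_
  · refine (continuous_inlW s₀).comp ((continuous_mkS S).comp (hs.prodMk
      (continuous_projI.comp (hu.div hdenom fun q => (aux_denom_pos q.1).ne'))))
  · exact (continuous_T0 s₀).comp ((continuous_const.mul hτ).mul (hu.sub hdenom))
  · intro q hq
    rw [show (3:ℝ)/2*(q.1:ℝ)*((q.2.2:ℝ) - (1 - 2*(q.1:ℝ)/3)) = 0 by rw [hq]; ring]
    unfold T0
    rw [if_pos (by norm_num), show (1:ℝ) - 2*0 = 1 by ring, projI_one,
      hq, div_self (aux_denom_pos q.1).ne', projI_one]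
    exact congrArg (inlW s₀) (mkS_one S q.2.1 s₀)

def HBcf (τ : unitInterval) (u : unitInterval) : Wedge (Susp S) Circle (suspSouth S s₀) 1 :=
  if (τ:ℝ) ≤ 1/2 then
    inrW s₀ (pmap (projI ((2*(τ:ℝ))*(max (3*(u:ℝ)-2) 0) + (1-2*(τ:ℝ))*(u:ℝ))))
  else if (u:ℝ) ≤ 1/3 then inlW s₀ (mkS S (s₀, projI ((3*(u:ℝ))*(2*(τ:ℝ)-1))))
  else if (u:ℝ) ≤ 2/3 then inlW s₀ (mkS S (s₀, projI ((2-3*(u:ℝ))*(2*(τ:ℝ)-1))))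
  else inrW s₀ (pmap (projI (3*(u:ℝ)-2)))

lemma HBcf_zero (τ : unitInterval) : HBcf s₀ τ 0 = inrW s₀ 1 := by
  unfold HBcf
  split_ifs with h1 h2 h3
  · rw [show (2*(τ:ℝ))*(max (3*((0:unitInterval):ℝ)-2) 0) +
      (1-2*(τ:ℝ))*((0:unitInterval):ℝ) = 0 by norm_num, projI_zero, pmap_zero]
  · rw [show (3*((0:unitInterval):ℝ))*(2*(τ:ℝ)-1) = 0 by norm_num, projI_zero]
    exact inlW_south s₀ s₀
  · exact absurd (by norm_num) h2
  · exact absurd (by norm_num) h2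

lemma HBcf_one (τ : unitInterval) : HBcf s₀ τ 1 = inrW s₀ 1 := by
  unfold HBcf
  split_ifs with h1 h2 h3
  · rw [show (2*(τ:ℝ))*(max (3*((1:unitInterval):ℝ)-2) 0) +
      (1-2*(τ:ℝ))*((1:unitInterval):ℝ) = 1 by norm_num, projI_one, pmap_one]
  · exact absurd h2 (by norm_num)
  · exact absurd h3 (by norm_num)
  · rw [show (3:ℝ)*((1:unitInterval):ℝ)-2 = 1 by norm_num, projI_one, pmap_one]

lemma HBc_eq (τ : unitInterval) (u : unitInterval) :
    HBcf s₀ τ (wmap (pmap u)) = HBcf s₀ τ u := by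
  rcases wmap_pmap u with h | ⟨h1, h2⟩
  · rw [h]
  · rw [h2, HBcf_zero, show u = 1 from Subtype.ext h1, HBcf_one]

lemma continuous_HBcf_uncurried : Continuous
    (fun q : unitInterval × unitInterval => HBcf s₀ q.1 q.2) := by
  unfold HBcf
  have hτ : Continuous fun q : unitInterval × unitInterval => ((q.1 : ℝ)) :=
    continuous_subtype_val.comp continuous_fst
  have hu : Continuous fun q : unitInterval × unitInterval => ((q.2 : ℝ)) :=
    continuous_subtype_val.comp continuous_snd
  refine Continuous.if_le ?_ ?_ hτ continuous_const ?_
  · exact (continuous_inrW s₀).comp (continuous_pmap.comp (continuous_projI.comp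
      (((continuous_const.mul hτ).mul (((continuous_const.mul hu).sub
        continuous_const).max continuous_const)).add
        ((continuous_const.sub (continuous_const.mul hτ)).mul hu))))
  · refine Continuous.if_le ?_ ?_ hu continuous_const ?_
    · exact (continuous_inlW s₀).comp ((continuous_mkS S).comp (continuous_const.prodMk
        (continuous_projI.comp ((continuous_const.mul hu).mul
          ((continuous_const.mul hτ).sub continuous_const)))))
    · refine Continuous.if_le ?_ ?_ hu continuous_const ?_
      · exact (continuous_inlW s₀).comp ((continuous_mkS S).comp (continuous_const.prodMk
          (continuous_projI.comp ((continuous_const.sub (continuous_const.mul hu)).mul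
            ((continuous_const.mul hτ).sub continuous_const)))))
      · exact (continuous_inrW s₀).comp (continuous_pmap.comp (continuous_projI.comp
          ((continuous_const.mul hu).sub continuous_const)))
      · -- u = 2/3
        intro q hq
        rw [show (2-3*(q.2:ℝ))*(2*(q.1:ℝ)-1) = 0 by rw [hq]; ring,
          show (3:ℝ)*(q.2:ℝ)-2 = 0 by rw [hq]; ring, projI_zero, pmap_zero]
        exact inlW_south s₀ s₀
    · -- u = 1/3
      intro q hq
      rw [if_pos (show ((q.2:ℝ)) ≤ 2/3 by rw [hq]; norm_num),
        show (3:ℝ)*(q.2:ℝ) = 1 by rw [hq]; ring]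
      norm_num
  · -- τ = 1/2
    intro q hq
    have e1 : (2:ℝ)*(q.1:ℝ) = 1 := by rw [hq]; norm_num
    rw [e1]
    rw [show ((1:ℝ)*(max (3*(q.2:ℝ)-2) 0) + (1-1)*(q.2:ℝ)) = max (3*(q.2:ℝ)-2) 0 by ring,
      show ((3:ℝ)*(q.2:ℝ))*(1-1) = 0 by ring,
      show ((2:ℝ)-3*(q.2:ℝ))*(1-1) = 0 by ring, projI_zero]
    by_cases h1 : ((q.2:ℝ)) ≤ 1/3
    · rw [if_pos h1, max_eq_right (by nlinarith), projI_zero, pmap_zero]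
      exact (inlW_south s₀ s₀).symm
    · rw [if_neg h1]
      push_neg at h1
      by_cases h2 : ((q.2:ℝ)) ≤ 2/3
      · rw [if_pos h2, max_eq_right (by nlinarith), projI_zero, pmap_zero]
        exact (inlW_south s₀ s₀).symm
      · rw [if_neg h2]
        push_neg at h2
        rw [max_eq_left (by nlinarith)]

def PW : (S × unitInterval) ⊕ unitInterval → Wedge (Susp S) Circle (suspSouth S s₀) 1 :=
  Sum.elim (fun p => inlW s₀ (mkS S p)) (fun u => inrW s₀ (pmap u))

lemma continuous_PW : Continuous (PW s₀) :=
  ((continuous_inlW s₀).comp (continuous_mkS S)).sumElim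
    ((continuous_inrW s₀).comp continuous_pmap)

lemma surjective_PW : Function.Surjective (PW s₀) := by
  intro w
  obtain ⟨a, rfl⟩ := Quot.exists_rep w
  rcases a with x | z
  · obtain ⟨p, rfl⟩ := Quot.exists_rep x
    exact ⟨Sum.inl p, rfl⟩
  · refine ⟨Sum.inr (wmap z), ?_⟩
    show inrW s₀ (pmap (wmap z)) = Quot.mk _ (Sum.inr z)
    rw [pmap_wmap]
    rfl

def homB [CompactSpace S] [T2Space S] :
    ContinuousMap.Homotopy
      (ContinuousMap.id (Wedge (Susp S) Circle (suspSouth S s₀) 1))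
      ((ContinuousMap.mk (fW s₀) (continuous_fW s₀)).comp
        (ContinuousMap.mk (gW s₀) (continuous_gW s₀))) where
  toFun := fun q => Quot.lift
    (Sum.elim (Quot.lift (HBs s₀ q.1) (HBs_resp s₀ q.1)) (fun z => HBcf s₀ q.1 (wmap z)))
    (by
      rintro a b ⟨rfl, rfl⟩
      show HBs s₀ q.1 (s₀, 0) = HBcf s₀ q.1 (wmap 1)
      rw [HBs_zero, wmap_one, HBcf_zero]) q.2
  continuous_toFun := by
    haveI := compactSpace_Susp (S := S)
    haveI := t2Space_W s₀
    rw [(PaperAux.isQuotientMap_id_prod (continuous_PW s₀) (surjective_PW s₀)).continuous_iff,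
      (PaperAux.isQuotientMap_prod_sum (X := S × unitInterval) (Y := unitInterval)).continuous_iff]
    have heq : ∀ q : (unitInterval × (S × unitInterval)) ⊕ (unitInterval × unitInterval),
        (((fun q : unitInterval × (Wedge (Susp S) Circle (suspSouth S s₀) 1) =>
        Quot.lift (Sum.elim (Quot.lift (HBs s₀ q.1) (HBs_resp s₀ q.1))
          (fun z => HBcf s₀ q.1 (wmap z)))
          (by
            rintro a b ⟨rfl, rfl⟩
            show HBs s₀ q.1 (s₀, 0) = HBcf s₀ q.1 (wmap 1)
            rw [HBs_zero, wmap_one, HBcf_zero]) q.2) ∘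
        (fun q : unitInterval × ((S × unitInterval) ⊕ unitInterval) => (q.1, PW s₀ q.2))) ∘
        (Sum.elim
          (fun q : unitInterval × (S × unitInterval) =>
            ((q.1, Sum.inl q.2) : unitInterval × ((S × unitInterval) ⊕ unitInterval)))
          (fun q : unitInterval × unitInterval => (q.1, Sum.inr q.2)))) q =
        (Sum.elim (fun q : unitInterval × (S × unitInterval) => HBs s₀ q.1 q.2)
          (fun q : unitInterval × unitInterval => HBcf s₀ q.1 q.2)) q := by
      rintro (⟨τ, p⟩ | ⟨τ, u⟩)
      · rfl
      · exact HBc_eq s₀ τ u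
    rw [funext heq]
    exact (continuous_HBs_uncurried s₀).sumElim (continuous_HBcf_uncurried s₀)
  map_zero_left := by
    intro w
    obtain ⟨a, rfl⟩ := Quot.exists_rep w
    rcases a with x | z
    · obtain ⟨p, rfl⟩ := Quot.exists_rep x
      show HBs s₀ 0 p = inlW s₀ (mkS S p)
      unfold HBs
      rw [show (1:ℝ) - 2*((0:unitInterval):ℝ)/3 = 1 by norm_num,
        if_pos p.2.2.2, div_one, projI_coe]
    · show HBcf s₀ 0 (wmap z) = inrW s₀ z
      unfold HBcf
      rw [if_pos (show ((0:unitInterval):ℝ) ≤ 1/2 by norm_num),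
        show (2*((0:unitInterval):ℝ))*(max (3*((wmap z:ℝ))-2) 0) +
          (1-2*((0:unitInterval):ℝ))*((wmap z:ℝ)) = ((wmap z:ℝ)) by norm_num,
        projI_coe, pmap_wmap]
  map_one_left := by
    intro w
    obtain ⟨a, rfl⟩ := Quot.exists_rep w
    have c1 : ((1:unitInterval):ℝ) = 1 := by norm_num
    rcases a with x | z
    · obtain ⟨p, rfl⟩ := Quot.exists_rep x
      show HBs s₀ 1 p = fW s₀ (gW s₀ (inlW s₀ (mkS S p)))
      rw [gW_inlW, gSusp_mkS, fW_mkZ]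
      unfold HBs fAux
      rw [c1, show (1:ℝ) - 2*(1:ℝ)/3 = 1/3 by norm_num]
      by_cases h1 : ((p.2:ℝ)) ≤ 1/3
      · rw [if_pos h1, if_pos h1, show ((p.2:ℝ)) / (1/3) = 3*(p.2:ℝ) by ring]
      · rw [if_neg h1, if_neg h1]
        push_neg at h1
        unfold T0
        rw [show (3:ℝ)/2*1*((p.2:ℝ) - 1/3) = (3*(p.2:ℝ)-1)/2 by ring]
        by_cases h2 : ((p.2:ℝ)) ≤ 2/3
        · rw [if_pos (show (3*(p.2:ℝ)-1)/2 ≤ 1/2 by linarith), if_pos h2,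
            show (1:ℝ) - 2*((3*(p.2:ℝ)-1)/2) = 2 - 3*(p.2:ℝ) by ring]
        · push_neg at h2
          rw [if_neg (show ¬ (3*(p.2:ℝ)-1)/2 ≤ 1/2 by push_neg; linarith),
            if_neg (by push_neg; exact h2),
            show (2:ℝ)*((3*(p.2:ℝ)-1)/2) - 1 = 3*(p.2:ℝ) - 2 by ring]
    · show HBcf s₀ 1 (wmap z) = fW s₀ (gW s₀ (inrW s₀ z))
      rw [gW_inrW]
      show HBcf s₀ 1 (wmap z) = fW s₀ (mkZ S (s₀, wmap z))
      rw [fW_mkZ]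
      unfold HBcf fAux
      rw [c1, if_neg (show ¬ (1:ℝ) ≤ 1/2 by norm_num),
        show ((3:ℝ)*((wmap z:ℝ)))*(2*1-1) = 3*((wmap z:ℝ)) by ring,
        show ((2:ℝ)-3*((wmap z:ℝ)))*(2*1-1) = 2-3*((wmap z:ℝ)) by ring]

/-- The core homotopy equivalence. -/
def coreEquiv [CompactSpace S] [T2Space S] :
    ContinuousMap.HomotopyEquiv (ZT S) (Wedge (Susp S) Circle (suspSouth S s₀) 1) where
  toFun := ContinuousMap.mk (fW s₀) (continuous_fW s₀)
  invFun := ContinuousMap.mk (gW s₀) (continuous_gW s₀)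
  left_inv := ⟨(homA s₀).symm⟩
  right_inv := ⟨(homB s₀).symm⟩

end Core
end Paper



namespace Paper

/-- If `K` is a global non-saddle set for a flow on a closed connected
manifold `M` and `S` is a global section of the flow on `M \ K`, then `M/K` is homotopy
equivalent to `ΣS ∨ S¹`. -/
theorem quotBy_global_nonsaddle_homotopyEquiv_wedge_susp_circle
    {M : Type} [TopologicalSpace M] [T2Space M] [CompactSpace M] [ConnectedSpace M]
    {n : ℕ} [ChartedSpace (EuclideanSpace ℝ (Fin n)) M]
    (φ : Flow ℝ M) (K S : Set M)
    (hK : IsGlobalNonSaddle φ K) (hS : IsGlobalSection φ K S) (s₀ : ↥S) :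
    Nonempty (ContinuousMap.HomotopyEquiv (QuotBySet M K)
      (Wedge (Susp ↥S) Circle (suspSouth ↥S s₀) 1)) := by
  classical
  obtain ⟨hNS, hIso, hKne, -, -⟩ := hK
  obtain ⟨hKcomp, hKinv, -⟩ := hNS
  obtain ⟨-, -, N, hNcomp, hKN, hNmax⟩ := hIso
  obtain ⟨hSsub, -, e, he⟩ := hS
  obtain ⟨k₀, hk₀⟩ := hKne
  -- every orbit outside `K` leaves the isolating neighbourhood
  have horb : ∀ x : M, x ∉ K → ∃ t : ℝ, φ t x ∉ interior N := by
    intro x hx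
    by_contra h
    push_neg at h
    have hmem : x ∈ maxInvariant φ N := fun t => interior_subset (h t)
    rw [hNmax] at hmem
    exact hx hmem
  -- the complement of K is invariant
  have hKcInv : ∀ (t : ℝ) (x : M), x ∉ K → φ t x ∉ K := by
    intro t x hx hmem
    apply hx
    have h2 : φ (-t) (φ t x) ∈ K := hKinv (-t) hmem
    rwa [← φ.map_add, show -t + t = 0 by ring, φ.map_zero_apply] at h2
  -- compactness of the section
  haveI : CompactSpace ↥((interior N)ᶜ) := isCompact_iff_compactSpace.mp
    (isOpen_interior.isClosed_compl.isCompact)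
  have hdown : Continuous fun x : ↥((interior N)ᶜ) =>
      e.symm ⟨(x:M), fun hmem => x.2 (hKN hmem)⟩ :=
    e.symm.continuous.comp (Continuous.subtype_mk continuous_subtype_val _)
  haveI hScomp : CompactSpace ↥S := by
    rw [← isCompact_univ_iff]
    have himg : (univ : Set ↥S) = Prod.fst '' (range fun x : ↥((interior N)ᶜ) =>
        e.symm ⟨(x:M), fun hmem => x.2 (hKN hmem)⟩) := by
      apply Subset.antisymm
      · intro s _
        obtain ⟨t, ht⟩ := horb (s:M) (hSsub s.2)
        have hyK : φ t (s:M) ∉ K := hKcInv t _ (hSsub s.2)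
        refine ⟨e.symm ⟨φ t (s:M), hyK⟩, ⟨⟨φ t (s:M), ht⟩, rfl⟩, ?_⟩
        have hse : e (s, t) = (⟨φ t (s:M), hyK⟩ : ↥(Kᶜ)) := Subtype.ext (he (s, t))
        rw [← hse, e.symm_apply_apply]
      · intro s _
        trivial
    rw [himg]
    exact (isCompact_range hdown).image continuous_fst
  -- the parametrising map ψ : S × I → M
  set ψ : ↥S × unitInterval → M := fun p =>
    if h : 0 < ((p.2:ℝ)) ∧ ((p.2:ℝ)) < 1 then ((e (p.1, PaperAux.tau ((p.2:ℝ)))) : M) else k₀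
    with hψdef
  have hbdr : ∀ u : unitInterval, ¬(0 < (u:ℝ) ∧ (u:ℝ) < 1) → (u = 0 ∨ u = 1) := by
    intro u hu
    push_neg at hu
    by_cases h0 : 0 < (u:ℝ)
    · exact Or.inr (Subtype.ext (le_antisymm u.2.2 (hu h0)))
    · exact Or.inl (Subtype.ext (le_antisymm (not_lt.mp h0) u.2.1))
  have hbdr' : ∀ u : unitInterval, (u = 0 ∨ u = 1) → ¬(0 < (u:ℝ) ∧ (u:ℝ) < 1) := by
    rintro u (rfl | rfl) <;> norm_num
  have hψbdry : ∀ p : ↥S × unitInterval, (p.2 = 0 ∨ p.2 = 1) → ψ p = k₀ := by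
    intro p hp
    simp only [hψdef]
    exact dif_neg (hbdr' p.2 hp)
  have hψint : ∀ (p : ↥S × unitInterval), (0 < ((p.2:ℝ)) ∧ ((p.2:ℝ)) < 1) →
      ψ p = ((e (p.1, PaperAux.tau ((p.2:ℝ)))) : M) := by
    intro p h
    simp only [hψdef]
    exact dif_pos h
  set q : M → QuotBySet M K := Quot.mk _ with hqdef
  have hqcont : Continuous q := continuous_quot_mk
  have hqK : ∀ m m', m ∈ K → m' ∈ K → q m = q m' := fun m m' hm hm' => Quot.sound ⟨hm, hm'⟩
  -- escape bound
  have hkey : ∀ (O : Set M), IsOpen O → K ⊆ O → ∃ R : ℝ, 0 ≤ R ∧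
      ∀ (s : ↥S) (t : ℝ), R < |t| → ((e (s, t)) : M) ∈ O := by
    intro O hOopen hKO
    have hFcomp : IsCompact Oᶜ := hOopen.isClosed_compl.isCompact
    haveI : CompactSpace ↥(Oᶜ) := isCompact_iff_compactSpace.mp hFcomp
    have hFK : Oᶜ ⊆ Kᶜ := compl_subset_compl.mpr hKO
    have hrange : IsCompact (range fun x : ↥(Oᶜ) => (e.symm ⟨(x:M), hFK x.2⟩).2) :=
      isCompact_range (continuous_snd.comp (e.symm.continuous.comp
        (Continuous.subtype_mk continuous_subtype_val _)))
    obtain ⟨R, hR⟩ := hrange.isBounded.subset_closedBall 0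
    refine ⟨max R 0, le_max_right _ _, ?_⟩
    intro s t ht
    by_contra hmem
    have hx : ((e (s,t)) : M) ∈ Oᶜ := hmem
    have hball : (e.symm ⟨((e (s,t)) : M), hFK hx⟩).2 ∈ Metric.closedBall (0:ℝ) R :=
      hR ⟨⟨_, hx⟩, rfl⟩
    have he2 : (⟨((e (s,t)) : M), hFK hx⟩ : ↥(Kᶜ)) = e (s,t) := Subtype.ext rfl
    rw [he2, e.symm_apply_apply] at hball
    simp only [Metric.mem_closedBall, Real.dist_eq, sub_zero] at hball
    have := le_max_left R 0
    linarith
  -- continuity of q ∘ ψ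
  have hθcont : Continuous (fun p => q (ψ p)) := by
    rw [continuous_iff_continuousAt]
    intro p
    by_cases hint : 0 < ((p.2:ℝ)) ∧ ((p.2:ℝ)) < 1
    · have hopen : IsOpen {p' : ↥S × unitInterval | 0 < ((p'.2:ℝ)) ∧ ((p'.2:ℝ)) < 1} := by
        have hset : {p' : ↥S × unitInterval | 0 < ((p'.2:ℝ)) ∧ ((p'.2:ℝ)) < 1} =
            (fun p' : ↥S × unitInterval => ((p'.2:ℝ))) ⁻¹' (Ioo 0 1) := rfl
        rw [hset]
        exact isOpen_Ioo.preimage (continuous_subtype_val.comp continuous_snd)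
      have htauOn : ContinuousOn PaperAux.tau (Ioo (0:ℝ) 1) := fun u hu =>
        (PaperAux.continuousAt_tau hu.1 hu.2).continuousWithinAt
      have htau2 : ContinuousOn (fun p' : ↥S × unitInterval => PaperAux.tau ((p'.2:ℝ)))
          {p' : ↥S × unitInterval | 0 < ((p'.2:ℝ)) ∧ ((p'.2:ℝ)) < 1} :=
        htauOn.comp ((continuous_subtype_val.comp continuous_snd).continuousOn)
          (fun p' hp' => hp')
      have hpair : ContinuousOn
          (fun p' : ↥S × unitInterval => ((p'.1, PaperAux.tau ((p'.2:ℝ))) : ↥S × ℝ))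
          {p' : ↥S × unitInterval | 0 < ((p'.2:ℝ)) ∧ ((p'.2:ℝ)) < 1} :=
        (continuous_fst.continuousOn).prodMk htau2
      have hgoodOn : ContinuousOn
          (fun p' : ↥S × unitInterval => q ((e (p'.1, PaperAux.tau ((p'.2:ℝ)))) : M))
          {p' : ↥S × unitInterval | 0 < ((p'.2:ℝ)) ∧ ((p'.2:ℝ)) < 1} :=
        (hqcont.comp (continuous_subtype_val.comp e.continuous)).comp_continuousOn hpair
      have hgood := hgoodOn.continuousAt (hopen.mem_nhds hint)
      refine hgood.congr ?_
      filter_upwards [hopen.mem_nhds hint] with p' hp'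
      show q ((e (p'.1, PaperAux.tau ((p'.2:ℝ)))) : M) = q (ψ p')
      rw [hψint p' hp']
    · have hbd : p.2 = 0 ∨ p.2 = 1 := hbdr p.2 hint
      have hval : q (ψ p) = q k₀ := by rw [hψbdry p hbd]
      rw [ContinuousAt, hval, Filter.tendsto_def]
      intro V hV
      obtain ⟨O', hO'V, hO'open, hO'mem⟩ := mem_nhds_iff.mp hV
      have hOopen : IsOpen (q ⁻¹' O') := hO'open.preimage hqcont
      have hKO : K ⊆ q ⁻¹' O' := by
        intro x hx
        show q x ∈ O'
        rw [hqK x k₀ hx hk₀]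
        exact hO'mem
      obtain ⟨R, hR0, hR⟩ := hkey (q ⁻¹' O') hOopen hKO
      rcases hbd with h0 | h1
      · have hco : ((p.2:ℝ)) = 0 := by rw [h0]; norm_num
        have hpmem : p ∈ {p' : ↥S × unitInterval | ((p'.2:ℝ)) < PaperAux.sig (-(R+1))} := by
          show ((p.2:ℝ)) < _
          rw [hco]
          exact PaperAux.sig_pos _
        have hopen2 : IsOpen {p' : ↥S × unitInterval | ((p'.2:ℝ)) < PaperAux.sig (-(R+1))} :=
          isOpen_Iio.preimage (continuous_subtype_val.comp continuous_snd)
        filter_upwards [hopen2.mem_nhds hpmem] with p' hp'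
        refine hO'V ?_
        show q (ψ p') ∈ O'
        by_cases hcond : 0 < ((p'.2:ℝ)) ∧ ((p'.2:ℝ)) < 1
        · rw [hψint p' hcond]
          have hlt : PaperAux.tau ((p'.2:ℝ)) < -(R+1) := by
            have hmono := PaperAux.tau_strictMonoOn ⟨hcond.1, hcond.2⟩
              (PaperAux.sig_mem (-(R+1))) hp'
            rwa [PaperAux.tau_sig] at hmono
          have habs : R < |PaperAux.tau ((p'.2:ℝ))| :=
            lt_of_lt_of_le (by linarith) (neg_le_abs _)
          exact hR _ _ habs
        · rw [hψbdry p' (hbdr p'.2 hcond)]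
          exact hO'mem
      · have hco : ((p.2:ℝ)) = 1 := by rw [h1]; norm_num
        have hpmem : p ∈ {p' : ↥S × unitInterval | PaperAux.sig (R+1) < ((p'.2:ℝ))} := by
          show _ < ((p.2:ℝ))
          rw [hco]
          exact PaperAux.sig_lt_one _
        have hopen2 : IsOpen {p' : ↥S × unitInterval | PaperAux.sig (R+1) < ((p'.2:ℝ))} :=
          isOpen_Ioi.preimage (continuous_subtype_val.comp continuous_snd)
        filter_upwards [hopen2.mem_nhds hpmem] with p' hp'
        refine hO'V ?_
        show q (ψ p') ∈ O'
        by_cases hcond : 0 < ((p'.2:ℝ)) ∧ ((p'.2:ℝ)) < 1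
        · rw [hψint p' hcond]
          have hlt : R + 1 < PaperAux.tau ((p'.2:ℝ)) := by
            have hmono := PaperAux.tau_strictMonoOn (PaperAux.sig_mem (R+1))
              ⟨hcond.1, hcond.2⟩ hp'
            rwa [PaperAux.tau_sig] at hmono
          have habs : R < |PaperAux.tau ((p'.2:ℝ))| :=
            lt_of_lt_of_le (by linarith) (le_abs_self _)
          exact hR _ _ habs
        · rw [hψbdry p' (hbdr p'.2 hcond)]
          exact hO'mem
  -- separation and compactness
  haveI hT2X : T2Space (QuotBySet M K) := by
    refine PaperAux.t2Space_quot_of_blobs (B0 := K) (B1 := ∅) hKcomp.isClosed isClosed_empty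
      (fun x _ hx => hx) (fun a b => ?_)
    rw [PaperAux.quot_mk_eq_pred (fun a : M => a ∈ K)]
    simp only [Set.mem_empty_iff_false, false_and, and_false, or_false]
  haveI hZTc : CompactSpace (ZT ↥S) := compactSpace_ZT (S := ↥S)
  -- the homeomorphism
  have hresp : ∀ p p' : ↥S × unitInterval,
      ((p.2 = 0 ∨ p.2 = 1) ∧ (p'.2 = 0 ∨ p'.2 = 1)) → q (ψ p) = q (ψ p') := by
    rintro p p' ⟨hp, hp'⟩
    rw [hψbdry p hp, hψbdry p' hp']
  set Φ : ZT ↥S → QuotBySet M K := Quot.lift (fun p => q (ψ p)) hresp with hΦdef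
  have hΦmk : ∀ p : ↥S × unitInterval, Φ (mkZ ↥S p) = q (ψ p) := fun p => rfl
  have hΦcont : Continuous Φ := continuous_quot_lift _ hθcont
  have hΦbij : Function.Bijective Φ := by
    constructor
    · intro z z' hzz
      obtain ⟨p, rfl⟩ := Quot.exists_rep z
      obtain ⟨p', rfl⟩ := Quot.exists_rep z'
      have hzz' : q (ψ p) = q (ψ p') := hzz
      show mkZ ↥S p = mkZ ↥S p'
      by_cases hc : 0 < ((p.2:ℝ)) ∧ ((p.2:ℝ)) < 1 <;>
        by_cases hc' : 0 < ((p'.2:ℝ)) ∧ ((p'.2:ℝ)) < 1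
      · rw [hψint p hc, hψint p' hc'] at hzz'
        rcases (PaperAux.quot_mk_eq_pred (fun a : M => a ∈ K) _ _).1 hzz' with heq | ⟨hmem, -⟩
        · have hsub : e (p.1, PaperAux.tau ((p.2:ℝ))) = e (p'.1, PaperAux.tau ((p'.2:ℝ))) :=
            Subtype.ext heq
          have hpair := e.injective hsub
          rw [Prod.ext_iff] at hpair
          have hu : ((p.2:ℝ)) = ((p'.2:ℝ)) :=
            (PaperAux.tau_strictMonoOn.injOn ⟨hc.1, hc.2⟩ ⟨hc'.1, hc'.2⟩ hpair.2)
          have : p = p' := Prod.ext hpair.1 (Subtype.ext hu)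
          rw [this]
        · exact absurd hmem (e (p.1, PaperAux.tau ((p.2:ℝ)))).2
      · rw [hψint p hc, hψbdry p' (hbdr p'.2 hc')] at hzz'
        rcases (PaperAux.quot_mk_eq_pred (fun a : M => a ∈ K) _ _).1 hzz' with heq | ⟨hmem, -⟩
        · exact absurd (heq ▸ hk₀) (e (p.1, PaperAux.tau ((p.2:ℝ)))).2
        · exact absurd hmem (e (p.1, PaperAux.tau ((p.2:ℝ)))).2
      · rw [hψbdry p (hbdr p.2 hc), hψint p' hc'] at hzz'
        rcases (PaperAux.quot_mk_eq_pred (fun a : M => a ∈ K) _ _).1 hzz' with heq | ⟨-, hmem⟩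
        · exact absurd (heq ▸ hk₀) (e (p'.1, PaperAux.tau ((p'.2:ℝ)))).2
        · exact absurd hmem (e (p'.1, PaperAux.tau ((p'.2:ℝ)))).2
      · exact mkZ_bdry ↥S (hbdr p.2 hc) (hbdr p'.2 hc')
    · intro x
      obtain ⟨m, rfl⟩ := Quot.exists_rep x
      by_cases hm : m ∈ K
      · refine ⟨mkZ ↥S (s₀, 0), ?_⟩
        rw [hΦmk, hψbdry _ (Or.inl rfl)]
        exact Quot.sound ⟨hk₀, hm⟩
      · refine ⟨mkZ ↥S ((e.symm ⟨m, hm⟩).1,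
          ⟨PaperAux.sig (e.symm ⟨m, hm⟩).2,
            ⟨(PaperAux.sig_pos _).le, (PaperAux.sig_lt_one _).le⟩⟩), ?_⟩
        rw [hΦmk, hψint _ ⟨PaperAux.sig_pos _, PaperAux.sig_lt_one _⟩]
        show q ((e ((e.symm ⟨m, hm⟩).1, PaperAux.tau (PaperAux.sig (e.symm ⟨m, hm⟩).2))) : M) =
          Quot.mk _ m
        rw [PaperAux.tau_sig,
          show ((e.symm ⟨m, hm⟩).1, (e.symm ⟨m, hm⟩).2) = e.symm ⟨m, hm⟩ from rfl,
          e.apply_symm_apply]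
  have homeo : ZT ↥S ≃ₜ QuotBySet M K :=
    Continuous.homeoOfEquivCompactToT2 (f := Equiv.ofBijective Φ hΦbij) hΦcont
  exact ⟨(homeo.symm.toHomotopyEquiv).trans (coreEquiv s₀)⟩


end Paper
end
end

section
/- Let K be an isolated non-saddle set for a flow on a compact metric space M. Then the following are equivalent: (1) there are no orbits homoclinic to K, i.e. for every x ∈ M \ K either ω(x) ∩ K = ∅ or ω*(x) ∩ K = ∅; (2) there exists a nonempty isolated non-saddle set L disjoint from K such that (K, L) is a non-saddle decomposition of M, meaning the orbit of every point not in K ∪ L is a connecting orbit between K and L. -/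
open Set Filter Topology CategoryTheory Metric

noncomputable section

namespace Paper

set_option linter.unusedSectionVars false

section AuxDyn

variable {M : Type} [MetricSpace M] [CompactSpace M] (φ : Flow ℝ M)

lemma flow_comp (t s : ℝ) (x : M) : φ t (φ s x) = φ (t + s) x := (φ.map_add t s x).symm

lemma flow_cancel (s : ℝ) (x : M) : φ (-s) (φ s x) = x := by
  rw [flow_comp, neg_add_cancel, φ.map_zero_apply]

lemma omegaLim_ne (x : M) : (omegaLim φ x).Nonempty :=
  nonempty_omegaLimit _ _ _ (singleton_nonempty x)

lemma alphaLim_ne (x : M) : (alphaLim φ x).Nonempty :=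
  nonempty_omegaLimit _ _ _ (singleton_nonempty x)

lemma omegaLim_shift (s : ℝ) (x : M) : omegaLim φ (φ s x) = omegaLim φ x := by
  have h := Flow.omegaLimit_image_eq atTop φ ({x} : Set M)
    (fun t => tendsto_atTop_add_const_right _ t tendsto_id) s
  simpa [image_singleton, omegaLim] using h

lemma alphaLim_shift (s : ℝ) (x : M) : alphaLim φ (φ s x) = alphaLim φ x := by
  have h := Flow.omegaLimit_image_eq atBot φ ({x} : Set M)
    (fun t => tendsto_atBot_add_const_right _ t tendsto_id) s
  simpa [image_singleton, alphaLim] using h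

lemma omegaLim_inv (x : M) : IsInvariant φ.toFun (omegaLim φ x) :=
  Flow.isInvariant_omegaLimit _ _ _ (fun t => tendsto_atTop_add_const_left _ t tendsto_id)

lemma alphaLim_inv (x : M) : IsInvariant φ.toFun (alphaLim φ x) :=
  Flow.isInvariant_omegaLimit _ _ _ (fun t => tendsto_atBot_add_const_left _ t tendsto_id)

lemma lim_subset_closed {f : Filter ℝ} {u : Set ℝ} (hu : u ∈ f) {C : Set M}
    (hC : IsClosed C) {x : M} (h : ∀ t ∈ u, φ t x ∈ C) :
    omegaLimit f φ.toFun {x} ⊆ C := by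
  refine (omegaLimit_subset_closure_fw_image f φ.toFun {x} hu).trans ?_
  rw [← hC.closure_eq]
  refine closure_mono ?_
  rintro y ⟨t, ht, x', rfl, rfl⟩
  exact h t ht

lemma omegaLim_subset_closed {C : Set M} (hC : IsClosed C) {x : M}
    (h : ∀ t : ℝ, 0 ≤ t → φ t x ∈ C) : omegaLim φ x ⊆ C :=
  lim_subset_closed φ (Ici_mem_atTop 0) hC (fun t ht => h t ht)

lemma alphaLim_subset_closed {C : Set M} (hC : IsClosed C) {x : M}
    (h : ∀ t : ℝ, t ≤ 0 → φ t x ∈ C) : alphaLim φ x ⊆ C :=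
  lim_subset_closed φ (Iic_mem_atBot 0) hC (fun t ht => h t ht)

lemma limits_subset_invariant {S : Set M} (hS : IsClosed S) (hinv : IsInvariant φ.toFun S)
    {z : M} (hz : z ∈ S) : omegaLim φ z ⊆ S ∧ alphaLim φ z ⊆ S :=
  ⟨omegaLim_subset_closed φ hS (fun t _ => hinv t hz),
   alphaLim_subset_closed φ hS (fun t _ => hinv t hz)⟩

lemma omegaLim_eventually {O : Set M} (hO : IsOpen O) {x : M} (h : omegaLim φ x ⊆ O) :
    ∀ᶠ t in atTop, φ t x ∈ O := by
  have := eventually_mapsTo_of_isOpen_of_omegaLimit_subset atTop φ.toFun {x} hO h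
  exact this.mono fun t ht => ht rfl

lemma alphaLim_eventually {O : Set M} (hO : IsOpen O) {x : M} (h : alphaLim φ x ⊆ O) :
    ∀ᶠ t in atBot, φ t x ∈ O := by
  have := eventually_mapsTo_of_isOpen_of_omegaLimit_subset atBot φ.toFun {x} hO h
  exact this.mono fun t ht => ht rfl

/-! transfer to the reverse flow -/

lemma reverse_apply (t : ℝ) (x : M) : φ.reverse t x = φ (-t) x := rfl

lemma omegaLim_reverse (x : M) : omegaLim φ.reverse x = alphaLim φ x := by
  apply Subset.antisymm
  · exact omegaLimit_subset_of_tendsto φ.toFun {x} tendsto_neg_atTop_atBot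
  · have h := omegaLimit_subset_of_tendsto (f₁ := atBot) (f₂ := atTop)
      φ.reverse.toFun ({x} : Set M) (m := Neg.neg) tendsto_neg_atBot_atTop
    have e : (fun (t : ℝ) (y : M) => φ.reverse.toFun (-t) y) = φ.toFun := by
      funext t y; simp [Flow.reverse]
    rw [e] at h
    exact h

lemma alphaLim_reverse (x : M) : alphaLim φ.reverse x = omegaLim φ x := by
  apply Subset.antisymm
  · exact omegaLimit_subset_of_tendsto φ.toFun {x} tendsto_neg_atBot_atTop
  · have h := omegaLimit_subset_of_tendsto (f₁ := atTop) (f₂ := atBot)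
      φ.reverse.toFun ({x} : Set M) (m := Neg.neg) tendsto_neg_atTop_atBot
    have e : (fun (t : ℝ) (y : M) => φ.reverse.toFun (-t) y) = φ.toFun := by
      funext t y; simp [Flow.reverse]
    rw [e] at h
    exact h

lemma reverse_pos {U : Set M} {x : M} : PosOrbitIn φ.reverse U x ↔ NegOrbitIn φ U x := by
  constructor
  · intro h t ht
    have := h (-t) (neg_nonneg.2 ht)
    rwa [reverse_apply, neg_neg] at this
  · intro h t ht
    exact h (-t) (neg_nonpos.2 ht)

lemma reverse_neg {U : Set M} {x : M} : NegOrbitIn φ.reverse U x ↔ PosOrbitIn φ U x := by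
  constructor
  · intro h t ht
    have := h (-t) (neg_nonpos.2 ht)
    rwa [reverse_apply, neg_neg] at this
  · intro h t ht
    exact h (-t) (neg_nonneg.2 ht)

lemma maxInvariant_reverse (N : Set M) : maxInvariant φ.reverse N = maxInvariant φ N := by
  ext x
  constructor
  · intro h t
    have := h (-t)
    rwa [reverse_apply, neg_neg] at this
  · intro h t
    exact h (-t)

lemma influence_reverse (K : Set M) :
    InfluenceRegion φ.reverse K = InfluenceRegion φ K := by
  ext x
  simp only [InfluenceRegion, mem_setOf_eq, omegaLim_reverse, alphaLim_reverse]
  exact or_comm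

lemma isInvariant_reverse {S : Set M} (h : IsInvariant φ.toFun S) :
    IsInvariant φ.reverse.toFun S := fun t => h (-t)

lemma influence_shift_mem (K : Set M) (s : ℝ) (x : M) :
    φ s x ∈ InfluenceRegion φ K ↔ x ∈ InfluenceRegion φ K := by
  simp only [InfluenceRegion, mem_setOf_eq, omegaLim_shift, alphaLim_shift]

lemma influence_invariant (K : Set M) : IsInvariant φ.toFun (InfluenceRegion φ K) :=
  fun t _x hx => (influence_shift_mem φ K t _).2 hx

lemma influence_compl_invariant (K : Set M) :
    IsInvariant φ.toFun (InfluenceRegion φ K)ᶜ := by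
  intro t x hx hmem
  exact hx ((influence_shift_mem φ K t x).1 hmem)

lemma invariant_subset_maxInvariant {S N : Set M} (hinv : IsInvariant φ.toFun S)
    (hSN : S ⊆ N) : S ⊆ maxInvariant φ N := fun p hp t => hSN (hinv t hp)

/-- The data of an isolating neighbourhood `W` of `K` together with the non-saddle
neighbourhood `V` and an open set `O` squeezed between. -/
structure BlockData (φ : Flow ℝ M) (K : Set M) : Type where
  W : Set M
  V : Set M
  O : Set M
  Wcpt : IsCompact W
  maxW : maxInvariant φ W = K
  Oopen : IsOpen O
  KO : K ⊆ O
  OV : O ⊆ V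
  VW : V ⊆ interior W
  sem : ∀ x ∈ V, PosOrbitIn φ (interior W) x ∨ NegOrbitIn φ (interior W) x

def BlockData.reverse {K : Set M} (B : BlockData φ K) : BlockData φ.reverse K where
  W := B.W
  V := B.V
  O := B.O
  Wcpt := B.Wcpt
  maxW := by rw [maxInvariant_reverse]; exact B.maxW
  Oopen := B.Oopen
  KO := B.KO
  OV := B.OV
  VW := B.VW
  sem := fun x hx => (B.sem x hx).symm.imp (reverse_pos φ).2 (reverse_neg φ).2

lemma BlockData.K_subset_W {K : Set M} (B : BlockData φ K) : K ⊆ B.W := by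
  intro x hx
  rw [← B.maxW] at hx
  have := hx 0
  rwa [φ.map_zero_apply] at this

lemma exists_blockData {K : Set M} (h1 : IsNonSaddle φ K) (h2 : IsIsolatedInvariant φ K)
    {δ : ℝ} (hδ : 0 < δ) : ∃ B : BlockData φ K, B.W ⊆ thickening δ K := by
  obtain ⟨N, Ncpt, KintN, maxN⟩ := h2.2.2
  set W := cthickening (δ/2) K ∩ N with hWdef
  have Wcpt : IsCompact W := Ncpt.inter_left isClosed_cthickening
  have hKW : K ⊆ interior W := by
    have hsub : thickening (δ/2) K ∩ interior N ⊆ W :=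
      inter_subset_inter (thickening_subset_cthickening _ _) interior_subset
    have hopen : IsOpen (thickening (δ/2) K ∩ interior N) :=
      isOpen_thickening.inter isOpen_interior
    intro x hx
    exact interior_maximal hsub hopen
      ⟨self_subset_thickening (by positivity) K hx, KintN hx⟩
  have maxW : maxInvariant φ W = K := by
    apply Subset.antisymm
    · rw [← maxN]; exact fun x hx t => (hx t).2
    · intro x hx t
      have hxt : φ t x ∈ K := h2.2.1 t hx
      exact ⟨self_subset_cthickening _ hxt, interior_subset (KintN hxt)⟩
  have hmem : interior W ∈ 𝓝ˢ K := by
    rw [← subset_interior_iff_mem_nhdsSet, interior_interior]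
    exact hKW
  obtain ⟨V, hVmem, hVsub, hVsem⟩ := h1.2.2 (interior W) hmem
  obtain ⟨O, Oopen, KO, OV⟩ := mem_nhdsSet_iff_exists.mp hVmem
  exact ⟨⟨W, V, O, Wcpt, maxW, Oopen, KO, OV, hVsub, hVsem⟩,
    inter_subset_left.trans (cthickening_subset_thickening' hδ (half_lt_self hδ) K)⟩

lemma mem_influence_of_pos {K : Set M} (B : BlockData φ K) {x : M}
    (h : PosOrbitIn φ (interior B.W) x) :
    (omegaLim φ x).Nonempty ∧ omegaLim φ x ⊆ K := by
  refine ⟨omegaLim_ne φ x, ?_⟩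
  have hW : omegaLim φ x ⊆ B.W :=
    omegaLim_subset_closed φ B.Wcpt.isClosed (fun t ht => interior_subset (h t ht))
  rw [← B.maxW]
  exact invariant_subset_maxInvariant φ (omegaLim_inv φ x) hW

lemma mem_influence_of_neg {K : Set M} (B : BlockData φ K) {x : M}
    (h : NegOrbitIn φ (interior B.W) x) :
    (alphaLim φ x).Nonempty ∧ alphaLim φ x ⊆ K := by
  refine ⟨alphaLim_ne φ x, ?_⟩
  have hW : alphaLim φ x ⊆ B.W :=
    alphaLim_subset_closed φ B.Wcpt.isClosed (fun t ht => interior_subset (h t ht))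
  rw [← B.maxW]
  exact invariant_subset_maxInvariant φ (alphaLim_inv φ x) hW

lemma influence_nhds_aux {K : Set M} (B : BlockData φ K) {x : M}
    (hx : omegaLim φ x ⊆ K) : InfluenceRegion φ K ∈ 𝓝 x := by
  have hev := omegaLim_eventually φ B.Oopen (hx.trans B.KO)
  obtain ⟨t₀, ht₀⟩ := hev.exists
  have hU : IsOpen ((fun y : M => φ t₀ y) ⁻¹' B.O) := B.Oopen.preimage (φ.continuous_toFun t₀)
  refine Filter.mem_of_superset (hU.mem_nhds ht₀) ?_
  intro y hy
  have hmem : φ t₀ y ∈ InfluenceRegion φ K := by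
    rcases B.sem _ (B.OV hy) with hpos | hneg
    · exact Or.inl (mem_influence_of_pos φ B hpos)
    · exact Or.inr (mem_influence_of_neg φ B hneg)
  exact (influence_shift_mem φ K t₀ y).1 hmem

lemma influence_isOpen {K : Set M} (B : BlockData φ K) : IsOpen (InfluenceRegion φ K) := by
  rw [isOpen_iff_mem_nhds]
  rintro x (⟨hn, hs⟩ | ⟨hn, hs⟩)
  · exact influence_nhds_aux φ B hs
  · have hs' : omegaLim φ.reverse x ⊆ K := by rwa [omegaLim_reverse]
    have := influence_nhds_aux φ.reverse (BlockData.reverse φ B) hs'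
    rwa [influence_reverse] at this

lemma omegaLim_closed (x : M) : IsClosed (omegaLim φ x) := isClosed_omegaLimit _ _ _

lemma alphaLim_closed (x : M) : IsClosed (alphaLim φ x) := isClosed_omegaLimit _ _ _

lemma hNH_reverse {K : Set M}
    (hNH : ∀ x ∉ K, omegaLim φ x ∩ K = ∅ ∨ alphaLim φ x ∩ K = ∅) :
    ∀ x ∉ K, omegaLim φ.reverse x ∩ K = ∅ ∨ alphaLim φ.reverse x ∩ K = ∅ := by
  intro y hy
  rw [omegaLim_reverse, alphaLim_reverse]
  exact (hNH y hy).symm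

/-- Key lemma: if `x ∉ K` tends forward to `K`, then its backward limit set avoids the
whole region of influence of `K`. -/
lemma alpha_subset_L {K : Set M}
    (hNH : ∀ x ∉ K, omegaLim φ x ∩ K = ∅ ∨ alphaLim φ x ∩ K = ∅)
    {x : M} (hxK : x ∉ K) (hω : omegaLim φ x ⊆ K) :
    alphaLim φ x ⊆ (InfluenceRegion φ K)ᶜ := by
  have hαK : alphaLim φ x ∩ K = ∅ := by
    rcases hNH x hxK with h | h
    · obtain ⟨p, hp⟩ := omegaLim_ne φ x
      have hmem : p ∈ omegaLim φ x ∩ K := ⟨hp, hω hp⟩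
      rw [h] at hmem
      exact absurd hmem (notMem_empty p)
    · exact h
  intro z hz hzI
  have hsub := limits_subset_invariant φ (alphaLim_closed φ x) (alphaLim_inv φ x) hz
  have hex : ∃ p, p ∈ alphaLim φ x ∩ K := by
    rcases hzI with ⟨hn, hs⟩ | ⟨hn, hs⟩
    · obtain ⟨p, hp⟩ := hn
      exact ⟨p, hsub.1 hp, hs hp⟩
    · obtain ⟨p, hp⟩ := hn
      exact ⟨p, hsub.2 hp, hs hp⟩
  obtain ⟨p, hp⟩ := hex
  rw [hαK] at hp
  exact hp

lemma L_nonempty {K : Set M}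
    (hNH : ∀ x ∉ K, omegaLim φ x ∩ K = ∅ ∨ alphaLim φ x ∩ K = ∅)
    (hproper : K ≠ univ) : ((InfluenceRegion φ K)ᶜ).Nonempty := by
  rw [nonempty_compl]
  intro hI
  obtain ⟨x, hxK⟩ := (ne_univ_iff_exists_notMem K).mp hproper
  have hxI : x ∈ InfluenceRegion φ K := hI ▸ mem_univ x
  rcases hxI with ⟨hn, hs⟩ | ⟨hn, hs⟩
  · obtain ⟨z, hz⟩ := alphaLim_ne φ x
    have hzc := alpha_subset_L φ hNH hxK hs hz
    rw [hI] at hzc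
    exact hzc (mem_univ z)
  · obtain ⟨z, hz⟩ := omegaLim_ne φ x
    have h' := alpha_subset_L φ.reverse (hNH_reverse φ hNH) hxK (by rwa [omegaLim_reverse])
    rw [alphaLim_reverse, influence_reverse] at h'
    have hzc := h' hz
    rw [hI] at hzc
    exact hzc (mem_univ z)

/-- The central compactness argument: the set of points of `U'` whose backward semiorbit
leaves `U'` but which tend forward to `K` cannot accumulate on a point of
`M ∖ ℐ(K)`. -/
lemma no_bad_cluster {K : Set M}
    (hNH : ∀ x ∉ K, omegaLim φ x ∩ K = ∅ ∨ alphaLim φ x ∩ K = ∅)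
    (B : BlockData φ K)
    {U' : Set M} (hU'open : IsOpen U')
    (hLU' : (InfluenceRegion φ K)ᶜ ⊆ U')
    (hdis : Disjoint (closure U') B.W)
    {x : M} (hxL : x ∈ (InfluenceRegion φ K)ᶜ)
    (hx : x ∈ closure {b | b ∈ U' ∧ ¬ NegOrbitIn φ U' b ∧ omegaLim φ b ⊆ K}) :
    False := by
  obtain ⟨b, hb, hbx⟩ := mem_closure_iff_seq_limit.mp hx
  have hUW : Disjoint U' B.W := hdis.mono_left subset_closure
  have hUK : ∀ y ∈ U', y ∉ K := fun y hy hyK =>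
    Set.disjoint_left.mp hUW hy (B.K_subset_W φ hyK)
  -- the backward orbit of each `b n` avoids `B.V`
  have havoid : ∀ n, ∀ s : ℝ, s ≤ 0 → φ s (b n) ∉ B.V := by
    intro n s hs hmem
    rcases B.sem _ hmem with hpos | hneg
    · have hb' : b n ∈ B.W := by
        have h' := hpos (-s) (neg_nonneg.2 hs)
        rw [flow_cancel] at h'
        exact interior_subset h'
      exact Set.disjoint_left.mp hUW (hb n).1 hb'
    · have hαs : alphaLim φ (φ s (b n)) ⊆ B.W :=
        alphaLim_subset_closed φ B.Wcpt.isClosed (fun t ht => interior_subset (hneg t ht))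
      have hα : alphaLim φ (b n) ⊆ K := by
        rw [← alphaLim_shift φ s (b n), ← B.maxW]
        exact invariant_subset_maxInvariant φ (alphaLim_inv φ _) hαs
      rcases hNH (b n) (hUK _ (hb n).1) with hom | hal
      · obtain ⟨p, hp⟩ := omegaLim_ne φ (b n)
        have hmem' : p ∈ omegaLim φ (b n) ∩ K := ⟨hp, (hb n).2.2 hp⟩
        rw [hom] at hmem'
        exact hmem'
      · obtain ⟨p, hp⟩ := alphaLim_ne φ (b n)
        have hmem' : p ∈ alphaLim φ (b n) ∩ K := ⟨hp, hα hp⟩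
        rw [hal] at hmem'
        exact hmem'
  -- first backward exit times
  have hSn : ∀ n, ∃ r : ℝ, 0 ≤ r ∧ φ (-r) (b n) ∉ U' ∧
      ∀ u, 0 ≤ u → u < r → φ (-u) (b n) ∈ U' := by
    intro n
    set S : Set ℝ := {t : ℝ | 0 ≤ t ∧ φ (-t) (b n) ∉ U'} with hS
    have hScl : IsClosed S := by
      have hc : IsClosed {t : ℝ | φ (-t) (b n) ∈ U'ᶜ} :=
        (hU'open.isClosed_compl).preimage (φ.continuous continuous_neg continuous_const)
      have hEq : S = Ici (0:ℝ) ∩ {t : ℝ | φ (-t) (b n) ∈ U'ᶜ} := by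
        ext t; simp [hS, mem_Ici, and_comm]
      rw [hEq]
      exact isClosed_Ici.inter hc
    have hSne : S.Nonempty := by
      obtain ⟨s, hs1, hs2⟩ : ∃ s, s ≤ 0 ∧ φ s (b n) ∉ U' := by
        by_contra hc
        push_neg at hc
        exact (hb n).2.1 (fun t ht => hc t ht)
      exact ⟨-s, neg_nonneg.2 hs1, by rwa [neg_neg]⟩
    have hbdd : BddBelow S := ⟨0, fun t ht => ht.1⟩
    have hmem := hScl.csInf_mem hSne hbdd
    refine ⟨sInf S, hmem.1, hmem.2, ?_⟩
    intro u hu hlt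
    by_contra hmemU
    exact absurd (csInf_le hbdd ⟨hu, hmemU⟩) (not_le.2 hlt)
  choose r hr0 hrout hrin using hSn
  set w : ℕ → M := fun n => φ (-(r n)) (b n) with hw
  have hwt : ∀ (t : ℝ) (n : ℕ), φ t (w n) = φ (t - r n) (b n) := by
    intro t n
    simp only [hw]
    rw [flow_comp, sub_eq_add_neg]
  by_cases hcase : ∀ T : ℝ, ∀ᶠ n in atTop, T < r n
  · -- the exit times tend to infinity
    obtain ⟨w₀, -, ψ, hψ, hwlim⟩ := isCompact_univ.tendsto_subseq (x := w) (fun n => mem_univ _)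
    have hrψ : ∀ T : ℝ, ∀ᶠ k in atTop, T < r (ψ k) := fun T =>
      hψ.tendsto_atTop.eventually (hcase T)
    have hfwd : ∀ t : ℝ, 0 < t → φ t w₀ ∈ closure U' := by
      intro t ht
      have hlim : Tendsto (fun k => φ t (w (ψ k))) atTop (𝓝 (φ t w₀)) :=
        ((φ.continuous_toFun t).tendsto w₀).comp hwlim
      refine mem_closure_of_tendsto hlim ?_
      filter_upwards [hrψ t] with k hk
      rw [hwt]
      have h2 : φ (-(r (ψ k) - t)) (b (ψ k)) ∈ U' := hrin _ _ (by linarith) (by linarith)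
      rwa [neg_sub] at h2
    have hωcl : omegaLim φ w₀ ⊆ closure U' :=
      lim_subset_closed φ (Ioi_mem_atTop 0) isClosed_closure (fun t ht => hfwd t ht)
    have hωK : ¬ omegaLim φ w₀ ⊆ K := by
      intro hsub
      obtain ⟨p, hp⟩ := omegaLim_ne φ w₀
      exact Set.disjoint_left.mp hdis (hωcl hp) (B.K_subset_W φ (hsub hp))
    have hwU' : w₀ ∉ U' :=
      hU'open.isClosed_compl.mem_of_tendsto hwlim (Eventually.of_forall (fun k => hrout _))
    have hwI : w₀ ∈ InfluenceRegion φ K := by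
      by_contra hc
      exact hwU' (hLU' hc)
    have hα : alphaLim φ w₀ ⊆ K := by
      rcases hwI with ⟨hn, hs⟩ | ⟨hn, hs⟩
      · exact absurd hs hωK
      · exact hs
    have hback : ∀ s : ℝ, s ≤ 0 → φ s w₀ ∉ B.O := by
      intro s hs hmem
      have hlim : Tendsto (fun k => φ s (w (ψ k))) atTop (𝓝 (φ s w₀)) :=
        ((φ.continuous_toFun s).tendsto w₀).comp hwlim
      have hev : ∀ᶠ k in atTop, φ s (w (ψ k)) ∈ B.O :=
        hlim.eventually (B.Oopen.mem_nhds hmem)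
      obtain ⟨k, hk⟩ := hev.exists
      have hnot : φ s (w (ψ k)) ∉ B.V := by
        rw [hwt]
        exact havoid _ _ (by have := hr0 (ψ k); linarith)
      exact hnot (B.OV hk)
    have hev := alphaLim_eventually φ B.Oopen (hα.trans B.KO)
    obtain ⟨s, hs1, hs2⟩ := (hev.and (eventually_le_atBot 0)).exists
    exact hback s hs2 hs1
  · -- a bounded subsequence of exit times
    push_neg at hcase
    obtain ⟨T, hT⟩ := hcase
    simp_rw [← not_lt] at hT
    obtain ⟨ψ, hψ, hψT⟩ :=
      Filter.extraction_of_frequently_atTop (hT.mono (fun n h => not_lt.1 h))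
    obtain ⟨ρ, hρmem, χ, hχ, hχlim⟩ := (isCompact_Icc (a := (0:ℝ)) (b := T)).tendsto_subseq
      (x := fun k => r (ψ k)) (fun k => ⟨hr0 _, hψT k⟩)
    have hblim : Tendsto (fun k => b (ψ (χ k))) atTop (𝓝 x) :=
      hbx.comp ((hψ.comp hχ).tendsto_atTop)
    have hrlim : Tendsto (fun k => -(r (ψ (χ k)))) atTop (𝓝 (-ρ)) := hχlim.neg
    have hwlim : Tendsto (fun k => w (ψ (χ k))) atTop (𝓝 (φ (-ρ) x)) := by
      have hpair : Tendsto (fun k => ((-(r (ψ (χ k))) : ℝ), b (ψ (χ k)))) atTop (𝓝 (-ρ, x)) :=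
        hrlim.prodMk_nhds hblim
      exact (φ.cont'.tendsto (-ρ, x)).comp hpair
    have hin : φ (-ρ) x ∈ (InfluenceRegion φ K)ᶜ := influence_compl_invariant φ K (-ρ) hxL
    have hnot : φ (-ρ) x ∉ U' :=
      hU'open.isClosed_compl.mem_of_tendsto hwlim (Eventually.of_forall (fun k => hrout _))
    exact hnot (hLU' hin)

lemma K_subset_influence {K : Set M} (hK : IsClosed K) (hKinv : IsInvariant φ.toFun K) :
    K ⊆ InfluenceRegion φ K := fun a ha =>
  Or.inl ⟨omegaLim_ne φ a, (limits_subset_invariant φ hK hKinv ha).1⟩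

lemma disjoint_K_L {K : Set M} (hK : IsClosed K) (hKinv : IsInvariant φ.toFun K) :
    Disjoint K (InfluenceRegion φ K)ᶜ := by
  rw [Set.disjoint_left]
  intro a ha haL
  exact haL (K_subset_influence φ hK hKinv ha)

lemma L_isolated {K : Set M} (h1 : IsNonSaddle φ K) (h2 : IsIsolatedInvariant φ K) :
    IsIsolatedInvariant φ ((InfluenceRegion φ K)ᶜ) := by
  obtain ⟨B₀, -⟩ := exists_blockData φ h1 h2 one_pos
  have hIopen := influence_isOpen φ B₀
  have hLclosed : IsClosed (InfluenceRegion φ K)ᶜ := hIopen.isClosed_compl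
  have hLcpt : IsCompact (InfluenceRegion φ K)ᶜ := hLclosed.isCompact
  have hLinv := influence_compl_invariant φ K
  refine ⟨hLcpt, hLinv, ?_⟩
  have hKL : Disjoint K (InfluenceRegion φ K)ᶜ := disjoint_K_L φ h1.1.isClosed h1.2.1
  obtain ⟨δ, hδ, hthick⟩ := hKL.exists_thickenings h1.1 hLclosed
  refine ⟨(thickening δ K)ᶜ, (isOpen_thickening.isClosed_compl).isCompact, ?_, ?_⟩
  · intro y hy
    have hsub : thickening δ (InfluenceRegion φ K)ᶜ ⊆ (thickening δ K)ᶜ := fun z hz hz' =>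
      Set.disjoint_left.mp hthick hz' hz
    exact interior_maximal hsub isOpen_thickening (self_subset_thickening hδ _ hy)
  · apply Subset.antisymm
    · intro y hy
      by_contra hyL
      have hyI : y ∈ InfluenceRegion φ K := not_not.mp hyL
      have hcl : IsClosed (thickening δ K)ᶜ := isOpen_thickening.isClosed_compl
      have hKsub : K ⊆ thickening δ K := self_subset_thickening hδ K
      rcases hyI with ⟨hn, hs⟩ | ⟨hn, hs⟩
      · obtain ⟨p, hp⟩ := hn
        exact (omegaLim_subset_closed φ hcl (fun t _ => hy t) hp) (hKsub (hs hp))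
      · obtain ⟨p, hp⟩ := hn
        exact (alphaLim_subset_closed φ hcl (fun t _ => hy t) hp) (hKsub (hs hp))
    · intro y hy t hmem
      exact Set.disjoint_left.mp hthick hmem (self_subset_thickening hδ _ (hLinv t hy))

lemma L_isNonSaddle {K : Set M} (h1 : IsNonSaddle φ K) (h2 : IsIsolatedInvariant φ K)
    (hNH : ∀ x ∉ K, omegaLim φ x ∩ K = ∅ ∨ alphaLim φ x ∩ K = ∅) :
    IsNonSaddle φ ((InfluenceRegion φ K)ᶜ) := by
  obtain ⟨B₀, -⟩ := exists_blockData φ h1 h2 one_pos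
  have hIopen := influence_isOpen φ B₀
  have hLclosed : IsClosed (InfluenceRegion φ K)ᶜ := hIopen.isClosed_compl
  have hLcpt : IsCompact (InfluenceRegion φ K)ᶜ := hLclosed.isCompact
  have hLinv := influence_compl_invariant φ K
  refine ⟨hLcpt, hLinv, ?_⟩
  intro U hU
  have hKL : Disjoint K (InfluenceRegion φ K)ᶜ := disjoint_K_L φ h1.1.isClosed h1.2.1
  obtain ⟨δ, hδ, hthick⟩ := hKL.exists_thickenings h1.1 hLclosed
  obtain ⟨B, hBW⟩ := exists_blockData φ h1 h2 (half_pos hδ)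
  set U' := interior U ∩ thickening (δ/2) (InfluenceRegion φ K)ᶜ with hU'def
  have hU'open : IsOpen U' := isOpen_interior.inter isOpen_thickening
  have hLU' : (InfluenceRegion φ K)ᶜ ⊆ U' := fun y hy =>
    ⟨subset_interior_iff_mem_nhdsSet.mpr hU hy, self_subset_thickening (half_pos hδ) _ hy⟩
  have hU'U : U' ⊆ U := fun y hy => interior_subset hy.1
  have hdis : Disjoint (closure U') B.W := by
    have hc1 : closure U' ⊆ thickening δ (InfluenceRegion φ K)ᶜ :=
      calc closure U' ⊆ closure (thickening (δ/2) (InfluenceRegion φ K)ᶜ) :=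
            closure_mono inter_subset_right
        _ ⊆ cthickening (δ/2) (InfluenceRegion φ K)ᶜ :=
            closure_thickening_subset_cthickening _ _
        _ ⊆ thickening δ (InfluenceRegion φ K)ᶜ :=
            cthickening_subset_thickening' hδ (half_lt_self hδ) _
    have hc2 : B.W ⊆ thickening δ K :=
      hBW.trans (thickening_mono (le_of_lt (half_lt_self hδ)) K)
    exact hthick.symm.mono hc1 hc2
  refine ⟨{y | y ∈ U' ∧ (PosOrbitIn φ U' y ∨ NegOrbitIn φ U' y)}, ?_, ?_, ?_⟩
  · rw [mem_nhdsSet_iff_forall]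
    intro x hxL
    by_contra hV
    have hn' : U' ∈ 𝓝 x := hU'open.mem_nhds (hLU' hxL)
    have hxcl : x ∈ closure
        ({y | y ∈ U' ∧ (PosOrbitIn φ U' y ∨ NegOrbitIn φ U' y)}ᶜ ∩ U') := by
      rw [mem_closure_iff_nhds]
      intro n hn
      by_contra hemp
      rw [not_nonempty_iff_eq_empty] at hemp
      apply hV
      refine Filter.mem_of_superset (inter_mem hn hn') ?_
      intro y hy
      by_contra hyV
      have hmemy : y ∈ n ∩ ({y | y ∈ U' ∧ (PosOrbitIn φ U' y ∨ NegOrbitIn φ U' y)}ᶜ ∩ U') :=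
        ⟨hy.1, hyV, hy.2⟩
      rw [hemp] at hmemy
      exact hmemy
    have hsub : ({y | y ∈ U' ∧ (PosOrbitIn φ U' y ∨ NegOrbitIn φ U' y)}ᶜ ∩ U') ⊆
        {b | b ∈ U' ∧ ¬ NegOrbitIn φ U' b ∧ omegaLim φ b ⊆ K} ∪
        {b | b ∈ U' ∧ ¬ PosOrbitIn φ U' b ∧ alphaLim φ b ⊆ K} := by
      rintro y ⟨hyV, hyU⟩
      have hnp : ¬(PosOrbitIn φ U' y ∨ NegOrbitIn φ U' y) := fun hc => hyV ⟨hyU, hc⟩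
      push_neg at hnp
      have hyI : y ∈ InfluenceRegion φ K := by
        by_contra hyL
        exact hnp.1 (fun t ht => hLU' (hLinv t hyL))
      rcases hyI with ⟨hn, hs⟩ | ⟨hn, hs⟩
      · exact Or.inl ⟨hyU, hnp.2, hs⟩
      · exact Or.inr ⟨hyU, hnp.1, hs⟩
    have hxcl' := (closure_mono hsub) hxcl
    rw [closure_union] at hxcl'
    rcases hxcl' with h | h
    · exact no_bad_cluster φ hNH B hU'open hLU' hdis hxL h
    · refine no_bad_cluster (x := x) φ.reverse (hNH_reverse φ hNH) (BlockData.reverse φ B) hU'open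
        ?_ ?_ ?_ ?_
      · rw [influence_reverse]; exact hLU'
      · exact hdis
      · rw [influence_reverse]; exact hxL
      · have hset : {b | b ∈ U' ∧ ¬ NegOrbitIn φ.reverse U' b ∧ omegaLim φ.reverse b ⊆ K} =
            {b | b ∈ U' ∧ ¬ PosOrbitIn φ U' b ∧ alphaLim φ b ⊆ K} := by
          ext c
          simp only [mem_setOf_eq, reverse_neg, omegaLim_reverse]
        rw [hset]
        exact h
  · exact fun y hy => hU'U hy.1
  · rintro y ⟨hyU, hor⟩
    exact hor.imp (fun h t ht => hU'U (h t ht)) (fun h t ht => hU'U (h t ht))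

lemma connecting_orbits {K : Set M}
    (hNH : ∀ x ∉ K, omegaLim φ x ∩ K = ∅ ∨ alphaLim φ x ∩ K = ∅) :
    ∀ x, x ∉ K ∪ (InfluenceRegion φ K)ᶜ →
      IsConnectingOrbit φ K ((InfluenceRegion φ K)ᶜ) x := by
  intro x hx
  rw [mem_union] at hx
  push_neg at hx
  obtain ⟨hxK, hxL⟩ := hx
  have hxI : x ∈ InfluenceRegion φ K := not_not.mp hxL
  rcases hxI with ⟨hn, hs⟩ | ⟨hn, hs⟩
  · exact Or.inl ⟨hn, hs, alphaLim_ne φ x, alpha_subset_L φ hNH hxK hs⟩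
  · refine Or.inr ⟨omegaLim_ne φ x, ?_, hn, hs⟩
    have h' := alpha_subset_L φ.reverse (hNH_reverse φ hNH) hxK (by rwa [omegaLim_reverse])
    rwa [alphaLim_reverse, influence_reverse] at h'

end AuxDyn


/-- For an isolated non-saddle set `K` of a flow on a compact metric space,
there are no orbits homoclinic to `K` (i.e. every `x ∉ K` has `ω(x) ∩ K = ∅` or
`ω*(x) ∩ K = ∅`) if and only if there is a nonempty isolated non-saddle set `L` such
that `(K, L)` is a non-saddle decomposition of `M`. -/
theorem nonsaddle_decomposition_iff_no_homoclinic
    {M : Type} [MetricSpace M] [CompactSpace M]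
    (φ : Flow ℝ M) (K : Set M)
    (h1 : IsNonSaddle φ K) (h2 : IsIsolatedInvariant φ K)
    (hne : K.Nonempty) (hproper : K ≠ univ) :
    (∀ x ∉ K, omegaLim φ x ∩ K = ∅ ∨ alphaLim φ x ∩ K = ∅) ↔
      ∃ L : Set M, IsNonSaddleDecomposition φ K L := by
  constructor
  · intro hNH
    exact ⟨(InfluenceRegion φ K)ᶜ,
      disjoint_K_L φ h1.1.isClosed h1.2.1, hne, L_nonempty φ hNH hproper,
      h1, h2, L_isNonSaddle φ h1 h2 hNH, L_isolated φ h1 h2,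
      connecting_orbits φ hNH⟩
  · rintro ⟨L, hdisj, hKne, hLne, hNSK, hIIK, hNSL, hIIL, hconn⟩ x hx
    by_cases hxL : x ∈ L
    · left
      have hωL : omegaLim φ x ⊆ L :=
        (limits_subset_invariant φ hNSL.1.isClosed hNSL.2.1 hxL).1
      rw [eq_empty_iff_forall_notMem]
      intro p hp
      exact Set.disjoint_left.mp hdisj hp.2 (hωL hp.1)
    · rcases hconn x (by rw [mem_union]; exact not_or.mpr ⟨hx, hxL⟩) with
        ⟨h1', h2', h3', h4'⟩ | ⟨h1', h2', h3', h4'⟩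
      · right
        rw [eq_empty_iff_forall_notMem]
        intro p hp
        exact Set.disjoint_left.mp hdisj hp.2 (h4' hp.1)
      · left
        rw [eq_empty_iff_forall_notMem]
        intro p hp
        exact Set.disjoint_left.mp hdisj hp.2 (h2' hp.1)

end Paper
end
end

section
/- Let K be a non-global W-set for a flow on a compact manifold M, with witness region 𝒲. Then 𝒲 is an open invariant subset of M with finitely many connected components, and L = M \ 𝒲 is a nonempty isolated invariant set which is the maximal compact invariant subset of M \ K; moreover K ∪ L is a global W-set. -/
open Set Filter Topology CategoryTheory Metric

noncomputable section

namespace Paper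

section Helpers

variable {M : Type} [TopologicalSpace M]

lemma omegaLim_flow (φ : Flow ℝ M) (t : ℝ) (x : M) : omegaLim φ (φ t x) = omegaLim φ x := by
  have h := Flow.omegaLimit_image_eq Filter.atTop φ ({x} : Set M)
    (fun c => tendsto_atTop_add_const_right _ c tendsto_id) t
  simpa [omegaLim, Set.image_singleton] using h

lemma alphaLim_flow (φ : Flow ℝ M) (t : ℝ) (x : M) : alphaLim φ (φ t x) = alphaLim φ x := by
  have h := Flow.omegaLimit_image_eq Filter.atBot φ ({x} : Set M)
    (fun c => tendsto_atBot_add_const_right _ c tendsto_id) t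
  simpa [alphaLim, Set.image_singleton] using h

lemma witnessed_flow_iff (φ : Flow ℝ M) (K : Set M) (t : ℝ) (x : M) :
    Witnessed φ K (φ t x) ↔ Witnessed φ K x := by
  unfold Witnessed
  rw [omegaLim_flow, alphaLim_flow]

lemma limits_subset_closure_orbit (φ : Flow ℝ M) (x : M) :
    omegaLim φ x ∪ alphaLim φ x ⊆ closure (Set.range fun t => φ t x) := by
  have h1 := omegaLimit_subset_closure_fw_image Filter.atTop φ.toFun ({x} : Set M)
    (univ_mem : Set.univ ∈ Filter.atTop)
  have h2 := omegaLimit_subset_closure_fw_image Filter.atBot φ.toFun ({x} : Set M)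
    (univ_mem : Set.univ ∈ Filter.atBot)
  rw [Set.image2_singleton_right, Set.image_univ] at h1 h2
  exact Set.union_subset h1 h2

lemma exists_orbit_mem {φ : Flow ℝ M} {x : M} {U : Set M} (hU : IsOpen U)
    (h : ((omegaLim φ x ∪ alphaLim φ x) ∩ U).Nonempty) : ∃ t, φ t x ∈ U := by
  obtain ⟨p, hp, hpU⟩ := h
  have hcl : p ∈ closure (Set.range fun t => φ t x) := limits_subset_closure_orbit φ x hp
  obtain ⟨y, hyU, hyr⟩ := mem_closure_iff_nhds.mp hcl U (hU.mem_nhds hpU)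
  obtain ⟨t, rfl⟩ := hyr
  exact ⟨t, hyU⟩

end Helpers

end Paper

namespace Paper

/-- For a non-global `W`-set `K` on a compact manifold, the witness region
`𝒲` is open and invariant with finitely many components, `L = M \ 𝒲` is a nonempty
isolated invariant set which is the maximal compact invariant subset of `M \ K`, and
`K ∪ L` is a global `W`-set. -/
theorem witness_region_structure
    {M : Type} [TopologicalSpace M] [T2Space M] [CompactSpace M]
    {n : ℕ} [ChartedSpace (EuclideanSpace ℝ (Fin n)) M]
    (φ : Flow ℝ M) (K : Set M) (hW : IsWSet φ K)
    (hng : WitnessRegion φ K ≠ univ) :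
    IsOpen (WitnessRegion φ K) ∧
    IsInvariant φ.toFun (WitnessRegion φ K) ∧
    Finite (ConnectedComponents ↥(WitnessRegion φ K)) ∧
    ((WitnessRegion φ K)ᶜ).Nonempty ∧
    IsCompact ((WitnessRegion φ K)ᶜ) ∧
    IsInvariant φ.toFun ((WitnessRegion φ K)ᶜ) ∧
    (WitnessRegion φ K)ᶜ ⊆ Kᶜ ∧
    (∀ C : Set M, IsCompact C → IsInvariant φ.toFun C → C ⊆ Kᶜ →
      C ⊆ (WitnessRegion φ K)ᶜ) ∧
    IsIsolatedInvariant φ ((WitnessRegion φ K)ᶜ) ∧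
    IsGlobalWSet φ (K ∪ (WitnessRegion φ K)ᶜ) := by
  obtain ⟨hKc, hKinv, hWn⟩ := hW
  set W := WitnessRegion φ K with hWdef
  obtain ⟨U, hUo, hKU, hUW⟩ := mem_nhdsSet_iff_exists.mp hWn
  have hKW : K ⊆ W := hKU.trans hUW
  -- invariance of W
  have hInv : IsInvariant φ.toFun W := by
    intro t x hx
    exact (witnessed_flow_iff φ K t x).mpr hx
  have hInvC : IsInvariant φ.toFun Wᶜ := by
    intro t x hx hmem
    exact hx ((witnessed_flow_iff φ K t x).mp hmem)
  -- range of the orbit lies in any invariant set containing x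
  have orbit_sub : ∀ {S : Set M}, IsInvariant φ.toFun S → ∀ {x}, x ∈ S →
      Set.range (fun t => φ t x) ⊆ S := by
    intro S hS x hx y hy
    obtain ⟨t, rfl⟩ := hy
    exact hS t hx
  -- every point of W has some orbit point in U
  have hOrbU : ∀ x ∈ W, ∃ t, φ t x ∈ U := by
    intro x hx
    obtain ⟨p, hp, hpK⟩ := hx
    exact exists_orbit_mem hUo ⟨p, hp, hKU hpK⟩
  -- W is open
  have hOpen : IsOpen W := by
    rw [isOpen_iff_mem_nhds]
    intro x hx
    obtain ⟨t, ht⟩ := hOrbU x hx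
    have hc : Continuous fun y : M => φ t y := φ.continuous_toFun t
    have : (fun y : M => φ t y) ⁻¹' U ∈ nhds x :=
      (hUo.preimage hc).mem_nhds ht
    refine Filter.mem_of_superset this ?_
    intro y hy
    exact (witnessed_flow_iff φ K t y).mp (hUW hy)
  have hLne : (Wᶜ).Nonempty := Set.nonempty_compl.mpr hng
  have hLc : IsCompact Wᶜ := hOpen.isClosed_compl.isCompact
  have hLK : Wᶜ ⊆ Kᶜ := Set.compl_subset_compl.mpr hKW
  -- maximality
  have hMax : ∀ C : Set M, IsCompact C → IsInvariant φ.toFun C → C ⊆ Kᶜ → C ⊆ Wᶜ := by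
    intro C hCc hCinv hCK x hxC
    intro hxW
    obtain ⟨p, hp, hpK⟩ := hxW
    have hpC : p ∈ C := by
      have := limits_subset_closure_orbit φ x hp
      have hsub : closure (Set.range fun t => φ t x) ⊆ C := by
        rw [← hCc.isClosed.closure_eq]
        exact closure_mono (orbit_sub hCinv hxC)
      exact hsub this
    exact hCK hpC hpK
  -- every point of W is in the same component (within W) as some point of K
  have hcomp : ∀ x ∈ W, ∃ p ∈ K, p ∈ connectedComponentIn W x := by
    intro x hx
    obtain ⟨p, hp, hpK⟩ := id hx
    refine ⟨p, hpK, ?_⟩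
    have hOconn : IsPreconnected (Set.range fun t => φ t x) :=
      isPreconnected_range (φ.continuous continuous_id continuous_const)
    have hxO : x ∈ Set.range fun t => φ t x := ⟨0, φ.map_zero_apply x⟩
    have hOW : Set.range (fun t => φ t x) ⊆ W := orbit_sub hInv hx
    have hOC : Set.range (fun t => φ t x) ⊆ connectedComponentIn W x :=
      hOconn.subset_connectedComponentIn hxO hOW
    have hpcl : p ∈ closure (Set.range fun t => φ t x) :=
      limits_subset_closure_orbit φ x hp
    haveI : LocallyConnectedSpace M :=
      ChartedSpace.locallyConnectedSpace (EuclideanSpace ℝ (Fin n)) M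
    have hpW : p ∈ W := hKW hpK
    have hVo : IsOpen (connectedComponentIn W p) := hOpen.connectedComponentIn
    obtain ⟨z, hzV, hzO⟩ := mem_closure_iff_nhds.mp hpcl _
      (hVo.mem_nhds (mem_connectedComponentIn hpW))
    have h1 : connectedComponentIn W p = connectedComponentIn W z :=
      connectedComponentIn_eq hzV
    have h2 : connectedComponentIn W x = connectedComponentIn W z :=
      connectedComponentIn_eq (hOC hzO)
    rw [h2, ← h1]
    exact mem_connectedComponentIn hpW
  -- finitely many components
  have hFin : Finite (ConnectedComponents ↥W) := by
    haveI : LocallyConnectedSpace M :=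
      ChartedSpace.locallyConnectedSpace (EuclideanSpace ℝ (Fin n)) M
    have hcover : K ⊆ ⋃ x ∈ K, connectedComponentIn W x := by
      intro x hx
      exact Set.mem_biUnion hx (mem_connectedComponentIn (hKW hx))
    obtain ⟨s, hsK, hsfin, hscover⟩ := hKc.elim_finite_subcover_image
      (fun x _ => hOpen.connectedComponentIn) hcover
    haveI := hsfin.to_subtype
    have hsurj : Function.Surjective
        (fun y : s => (ConnectedComponents.mk ⟨(y : M), hKW (hsK y.2)⟩ :
          ConnectedComponents ↥W)) := by
      rintro c
      obtain ⟨y, rfl⟩ := ConnectedComponents.surjective_coe c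
      obtain ⟨p, hpK, hpc⟩ := hcomp y.1 y.2
      obtain ⟨a, has, hpa⟩ := Set.mem_iUnion₂.mp (hscover hpK)
      refine ⟨⟨a, has⟩, ?_⟩
      have haW : a ∈ W := hKW (hsK has)
      have h1 : connectedComponentIn W a = connectedComponentIn W p :=
        connectedComponentIn_eq hpa
      have h2 : connectedComponentIn W y.1 = connectedComponentIn W p :=
        connectedComponentIn_eq hpc
      have hy : y.1 ∈ connectedComponentIn W a := by
        rw [h1, ← h2]
        exact mem_connectedComponentIn y.2
      rw [connectedComponentIn_eq_image haW] at hy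
      obtain ⟨z, hz, hzy⟩ := hy
      have hzeq : z = y := Subtype.ext hzy
      rw [hzeq] at hz
      exact ConnectedComponents.coe_eq_coe.mpr (connectedComponent_eq hz)
    exact Finite.of_surjective _ hsurj
  -- isolated invariant
  have hIso : IsIsolatedInvariant φ Wᶜ := by
    refine ⟨hLc, hInvC, ?_⟩
    obtain ⟨N', hN'c, hKN', hN'W⟩ := exists_compact_between hKc hOpen hKW
    refine ⟨(interior N')ᶜ, isOpen_interior.isClosed_compl.isCompact, ?_, ?_⟩
    · rw [interior_compl]
      intro x hx
      intro hmem
      exact hx (hN'W (closure_minimal interior_subset hN'c.isClosed hmem))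
    · apply Set.Subset.antisymm
      · intro x hx
        by_contra hxW
        simp only [Set.mem_compl_iff, not_not] at hxW
        obtain ⟨p, hp, hpK⟩ := hxW
        obtain ⟨t, ht⟩ := exists_orbit_mem isOpen_interior ⟨p, hp, hKN' hpK⟩
        exact hx t ht
      · intro x hx t hmem
        exact hInvC t hx (hN'W (interior_subset hmem))
  -- global W-set
  have hGlob : IsGlobalWSet φ (K ∪ Wᶜ) := by
    have hWR : WitnessRegion φ (K ∪ Wᶜ) = Set.univ := by
      apply Set.eq_univ_iff_forall.mpr
      intro x
      by_cases hx : x ∈ W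
      · obtain ⟨p, hp, hpK⟩ := hx
        exact ⟨p, hp, Or.inl hpK⟩
      · have hxL : x ∈ Wᶜ := hx
        have hne : (omegaLim φ x).Nonempty :=
          nonempty_omegaLimit Filter.atTop φ.toFun {x} (Set.singleton_nonempty x)
        obtain ⟨p, hp⟩ := hne
        have hpL : p ∈ Wᶜ := by
          have hsub : closure (Set.range fun t => φ t x) ⊆ Wᶜ := by
            rw [← hLc.isClosed.closure_eq]
            exact closure_mono (orbit_sub hInvC hxL)
          exact hsub (limits_subset_closure_orbit φ x (Or.inl hp))
        exact ⟨p, Or.inl hp, Or.inr hpL⟩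
    refine ⟨⟨hKc.union hLc, ?_, ?_⟩, hWR⟩
    · intro t x hx
      rcases hx with hx | hx
      · exact Or.inl (hKinv t hx)
      · exact Or.inr (hInvC t hx)
    · rw [hWR]
      exact Filter.univ_mem
  exact ⟨hOpen, hInv, hFin, hLne, hLc, hInvC, hLK, hMax, hIso, hGlob⟩


end Paper
end
end
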